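/- arXiv:2008.05669 — 5 statements merged into one kernel-verified Lean document; each statement's English description precedes it below -/
import Mathlib

section
/- For every Dyck path D, the number of pairs of consecutive valleys at the same height equals the number of symmetric peaks of D that are neither the first nor the last peak of D; in particular, the two statistics differ exactly when D starts or ends with a symmetric peak. -/
/-- Height of the vertex after the first `j` steps of the path `w`
(`true` = up-step `u`, `false` = down-step `d`). -/
def hgt (w : List Bool) (j : ℕ) : ℤ :=
  ((w.take j).count true : ℤ) - ((w.take j).count false : ℤ)

/-- `w` is a Dyck word: equally many `u`'s and `d`'s, and every prefix
has at least as many `u`'s as `d`'s. -/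
def IsDyckWord (w : List Bool) : Prop :=
  w.count true = w.count false ∧ ∀ j, 0 ≤ hgt w j

instance : DecidablePred IsDyckWord := fun w => by
  have : IsDyckWord w ↔ (w.count true = w.count false ∧
      ∀ j ∈ List.range (w.length + 1), 0 ≤ hgt w j) := by
    constructor
    · rintro ⟨h1, h2⟩; exact ⟨h1, fun j _ => h2 j⟩
    · rintro ⟨h1, h2⟩
      refine ⟨h1, fun j => ?_⟩
      rcases le_or_gt j w.length with h | h
      · exact h2 j (List.mem_range.mpr (Nat.lt_succ_of_le h))
      · have : w.take j = w := List.take_of_length_le h.le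
        have hw : hgt w j = hgt w w.length := by
          unfold hgt
          rw [this, List.take_of_length_le (le_refl _)]
        rw [hw]
        exact h2 w.length (List.mem_range.mpr (Nat.lt_succ_of_le (le_refl _)))
  exact decidable_of_iff' _ this

/-- there is a peak (an occurrence of `ud`) at positions `i, i+1`. -/
def isPeakB (w : List Bool) (i : ℕ) : Bool :=
  w.getD i false && !(w.getD (i+1) true)

/-- there is a valley (an occurrence of `du`) at positions `i, i+1`. -/
def isValleyB (w : List Bool) (i : ℕ) : Bool :=
  !(w.getD i true) && w.getD (i+1) false

/-- length of the maximal run of `u`'s ending at position `i`. -/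
def upRunL (w : List Bool) (i : ℕ) : ℕ :=
  ((List.range (i+1)).takeWhile (fun k => w.getD (i-k) false)).length

/-- length of the maximal run of `d`'s starting at position `i`. -/
def downRunR (w : List Bool) (i : ℕ) : ℕ :=
  ((List.range (w.length - i)).takeWhile (fun k => !(w.getD (i+k) true))).length

/-- length of the maximal run of `d`'s ending at position `i`. -/
def downRunL (w : List Bool) (i : ℕ) : ℕ :=
  ((List.range (i+1)).takeWhile (fun k => !(w.getD (i-k) true))).length

/-- length of the maximal run of `u`'s starting at position `i`. -/
def upRunR (w : List Bool) (i : ℕ) : ℕ :=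
  ((List.range (w.length - i)).takeWhile (fun k => w.getD (i+k) false)).length

/-- The peak at `i` is symmetric: its maximal mountain `u^a d^b` has `a = b`. -/
def isSymPeakB (w : List Bool) (i : ℕ) : Bool :=
  isPeakB w i && (upRunL w i == downRunR w (i+1))

/-- The peak at `i` is asymmetric: its maximal mountain `u^a d^b` has `a ≠ b`. -/
def isAsymPeakB (w : List Bool) (i : ℕ) : Bool :=
  isPeakB w i && !(upRunL w i == downRunR w (i+1))

/-- weight of the peak at `i`: `min a b` for its maximal mountain `u^a d^b`. -/
def peakWeight (w : List Bool) (i : ℕ) : ℕ :=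
  min (upRunL w i) (downRunR w (i+1))

/-- The valley at `i` is symmetric: the maximal `d^a u^b` containing it has `a = b`. -/
def isSymValleyB (w : List Bool) (i : ℕ) : Bool :=
  isValleyB w i && (downRunL w i == upRunR w (i+1))

/-- weight of the valley at `i`: the largest `j` with `d^j u^j` through the valley. -/
def valleyWeight (w : List Bool) (i : ℕ) : ℕ :=
  min (downRunL w i) (upRunR w (i+1))

def peakCount (w : List Bool) : ℕ := ((List.range w.length).filter (isPeakB w)).length
def spCount (w : List Bool) : ℕ := ((List.range w.length).filter (isSymPeakB w)).length
def apCount (w : List Bool) : ℕ := ((List.range w.length).filter (isAsymPeakB w)).length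
def svalCount (w : List Bool) : ℕ := ((List.range w.length).filter (isSymValleyB w)).length

/-- total weight of the symmetric peaks of `w`. -/
def spWeight (w : List Bool) : ℕ :=
  (((List.range w.length).filter (isSymPeakB w)).map (peakWeight w)).sum

/-- total weight of the asymmetric peaks of `w`. -/
def apWeight (w : List Bool) : ℕ :=
  (((List.range w.length).filter (isAsymPeakB w)).map (peakWeight w)).sum

/-- total weight of the symmetric valleys of `w`. -/
def svWeight (w : List Bool) : ℕ :=
  (((List.range w.length).filter (isSymValleyB w)).map (valleyWeight w)).sum

/-- positions of the peaks of `w`, from left to right. -/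
def peakList (w : List Bool) : List ℕ := (List.range w.length).filter (isPeakB w)

/-- positions of the valleys of `w`, from left to right. -/
def valleyList (w : List Bool) : List ℕ := (List.range w.length).filter (isValleyB w)

/-- heights of the peaks of `w`, from left to right. -/
def peakHeights (w : List Bool) : List ℤ := (peakList w).map (fun i => hgt w (i+1))

/-- heights of the valleys of `w`, from left to right. -/
def valleyHeights (w : List Bool) : List ℤ := (valleyList w).map (fun i => hgt w (i+1))

/-- number of pairs of adjacent equal entries of a list. -/
def eqAdjCount (l : List ℤ) : ℕ :=
  ((l.zip l.tail).filter (fun p => decide (p.1 = p.2))).length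

/-- `sp'`: number of pairs of consecutive valleys of `w` at the same height. -/
def spPrime (w : List Bool) : ℕ := eqAdjCount (valleyHeights w)

/-- all Bool lists of length `m`, as a Finset. -/
def boolLists (m : ℕ) : Finset (List Bool) :=
  Finset.image (fun f : Fin m → Bool => List.ofFn f) Finset.univ

/-- The (finite) set of Dyck words of semilength `n`. -/
def dyckFinset (n : ℕ) : Finset (List Bool) :=
  (boolLists (2*n)).filter (fun w => IsDyckWord w)

/-!
A nonempty Dyck word starts with `u` and ends with `d`, so it is a product of mountains
`u^a₁ d^b₁ ⋯ u^aₖ d^bₖ` with all `aᵢ, bᵢ > 0`. Its peaks are the `k` mountain tops, the `i`-th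
one symmetric iff `aᵢ = bᵢ`, and its valleys are the `k - 1` junctions, the `i`-th one at height
`∑_{j ≤ i} (aⱼ - bⱼ)`. Hence valleys `i` and `i + 1` are at the same height iff `aᵢ₊₁ = bᵢ₊₁`,
i.e. iff the interior peak `i + 1` is symmetric.
-/

namespace List

theorem length_takeWhile_range_eq_iff {n r : ℕ} {p : ℕ → Bool} :
    ((range n).takeWhile p).length = r ↔
      r ≤ n ∧ (∀ k < r, p k = true) ∧ (r < n → p r = false) := by
  induction n generalizing r p with
  | zero =>
    simp only [range_zero, takeWhile_nil, length_nil]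
    constructor
    · rintro rfl; simp
    · rintro ⟨h, -, -⟩; omega
  | succ n ih =>
    rw [range_succ_eq_map, takeWhile_cons, takeWhile_map]
    cases h0 : p 0
    · simp only [Bool.false_eq_true, ↓reduceIte, length_nil]
      constructor
      · rintro rfl; simp [h0]
      · rintro ⟨-, hp, hr⟩
        by_contra hne
        simpa [h0] using hp 0 (by omega)
    · simp only [↓reduceIte, length_cons, length_map, Function.comp_def]
      cases r with
      | zero => simp [h0]
      | succ r =>
        rw [Nat.add_right_cancel_iff, ih]
        constructor
        · rintro ⟨hrn, hp, hr⟩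
          refine ⟨by omega, fun k hk => ?_, fun h => hr (by omega)⟩
          cases k with
          | zero => exact h0
          | succ k => exact hp k (by omega)
        · rintro ⟨hrn, hp, hr⟩
          exact ⟨by omega, fun k hk => hp (k + 1) (by omega), fun h => hr (by omega)⟩

theorem filter_range_eq_singleton {n m : ℕ} (hm : m < n) :
    (range n).filter (fun i => decide (i = m)) = [m] := by
  rw [filter_eq, count_eq_one_of_mem nodup_range (mem_range.mpr hm), replicate_one]

theorem scanl_add_eq_map {α : Type*} [AddMonoid α] (c : α) (D : List α) :
    D.scanl (· + ·) c = (D.scanl (· + ·) 0).map (c + ·) := by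
  induction D generalizing c with
  | nil => simp
  | cons x D ih => simp [scanl_cons, ih (c + x), ih x, Function.comp_def, add_assoc]

theorem length_filter_range_getD {α : Type*} (l : List α) (f : α → Bool) (d : α) :
    ((range l.length).filter fun j => f (l.getD j d)).length = (l.map f).count true := by
  induction l with
  | nil => rfl
  | cons x l ih =>
    rw [length_cons, range_succ_eq_map, filter_cons, filter_map, map_cons, count_cons]
    simp only [Function.comp_def, getD_cons_succ, getD_cons_zero]
    split <;> simp_all

theorem length_filter_range_interior {α : Type*} (l : List α) (f : α → Bool) (d : α) :
    ((range l.length).filter fun j =>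
        decide (0 < j) && decide (j + 1 < l.length) && f (l.getD j d)).length =
      (l.map f).tail.dropLast.count true := by
  rcases l with _ | ⟨x, M⟩
  · rfl
  rcases eq_nil_or_concat M with rfl | ⟨M, y, rfl⟩
  · simp
  rw [concat_eq_append, map_cons, tail_cons, map_append, map_singleton, dropLast_concat,
    ← length_filter_range_getD M f d, length_cons, length_append, length_singleton,
    range_succ_eq_map, range_succ, filter_cons, filter_map, filter_append]
  simp only [Function.comp_def, getD_cons_succ]
  rw [if_neg (by simp), length_map, length_append, filter_singleton]
  simp only [Nat.succ_eq_add_one, lt_self_iff_false, decide_false, Bool.and_false, Bool.false_and,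
    cond_false, length_nil, add_zero]
  congr 1
  refine filter_congr fun j hj => ?_
  rw [getD_append _ _ _ _ (mem_range.mp hj)]
  simp [mem_range.mp hj]

theorem count_tail_dropLast_ne_count_iff (s : List Bool) :
    s.tail.dropLast.count true ≠ s.count true ↔
      s.head? = some true ∨ s.getLast? = some true := by
  rcases s with _ | ⟨x, M⟩
  · simp
  rcases eq_nil_or_concat M with rfl | ⟨M, y, rfl⟩
  · cases x <;> simp
  rw [concat_eq_append, getLast?_cons, getLast?_append]
  cases x <;> cases y <;> simp [add_assoc]

end List

open List

theorem eqAdjCount_cons (x : ℤ) (l : List ℤ) :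
    eqAdjCount (x :: l) = (if l.head? = some x then 1 else 0) + eqAdjCount l := by
  cases l with
  | nil => rfl
  | cons y l =>
    simp only [eqAdjCount, tail_cons, zip_cons_cons, filter_cons, head?_cons, Option.some.injEq]
    split <;> simp_all [eq_comm, add_comm]

theorem eqAdjCount_scanl_add (c : ℤ) (D : List ℤ) : eqAdjCount (D.scanl (· + ·) c) = D.count 0 := by
  induction D generalizing c with
  | nil => rfl
  | cons x D ih =>
    rw [scanl_cons, eqAdjCount_cons, head?_scanl, ih, count_cons]
    simp [add_comm]

theorem eqAdjCount_tail_scanl_add_zero (D : List ℤ) :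
    eqAdjCount (D.scanl (· + ·) 0).tail = D.tail.count 0 := by
  cases D with
  | nil => rfl
  | cons x D => rw [scanl_cons, tail_cons, tail_cons, eqAdjCount_scanl_add]

theorem spCount_eq_count (w : List Bool) :
    spCount w = ((peakList w).map (isSymPeakB w)).count true := by
  rw [spCount, peakList, count, countP_map, countP_eq_length_filter, filter_filter]
  congr 1
  refine filter_congr fun i _ => ?_
  simp only [isSymPeakB, Function.comp_apply]
  cases isPeakB w i <;> simp

def mountain (a b : ℕ) : List Bool := replicate a true ++ replicate b false

def mountains (L : List (ℕ × ℕ)) : List Bool := L.flatMap fun p => mountain p.1 p.2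

section MountainAppend

variable {a b : ℕ} (t : List Bool)

@[simp]
theorem length_mountain : (mountain a b).length = a + b := by simp [mountain]

theorem getD_mountain_append_of_lt {i : ℕ} (h : i < a) (d : Bool) :
    (mountain a b ++ t).getD i d = true := by
  simp [mountain, getD_eq_getElem?_getD, getElem?_append, h]

theorem getD_mountain_append_of_le_of_lt {i : ℕ} (h₁ : a ≤ i) (h₂ : i < a + b) (d : Bool) :
    (mountain a b ++ t).getD i d = false := by
  simp [mountain, getD_eq_getElem?_getD, getElem?_append, not_lt.mpr h₁, show i - a < b by omega]

theorem getD_mountain_append_add (j : ℕ) (d : Bool) :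
    (mountain a b ++ t).getD (a + b + j) d = t.getD j d := by
  simp [getD_eq_getElem?_getD, getElem?_append_right]

theorem hgt_mountain_append_add (j : ℕ) :
    hgt (mountain a b ++ t) (a + b + j) = (a - b : ℤ) + hgt t j := by
  rw [← length_mountain (a := a) (b := b), hgt, take_length_add_append, hgt, count_append,
    count_append]
  simp only [mountain, count_append, count_replicate_self, count_replicate, beq_true, beq_false,
    Bool.not_true, Bool.false_eq_true, ↓reduceIte]
  push_cast
  ring

theorem upRunL_mountain_append (ha : 0 < a) : upRunL (mountain a b ++ t) (a - 1) = a := by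
  rw [upRunL, length_takeWhile_range_eq_iff]
  exact ⟨by omega, fun k hk => getD_mountain_append_of_lt t (by omega) _, by omega⟩

theorem downRunR_mountain_append (ht : t.getD 0 true = true) :
    downRunR (mountain a b ++ t) a = b := by
  rw [downRunR, length_takeWhile_range_eq_iff]
  refine ⟨by rw [length_append, length_mountain]; omega, fun k hk => ?_, fun _ => ?_⟩
  · rw [getD_mountain_append_of_le_of_lt t (by omega) (by omega)]
    rfl
  · rw [← add_zero (a + b), getD_mountain_append_add, ht]
    rfl

theorem upRunL_mountain_append_add (hb : 0 < b) (j : ℕ) :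
    upRunL (mountain a b ++ t) (a + b + j) = upRunL t j := by
  obtain ⟨hle, htrue, hfalse⟩ := length_takeWhile_range_eq_iff.mp (rfl : upRunL t j = _)
  refine length_takeWhile_range_eq_iff.mpr ⟨by omega, fun k hk => ?_, fun h => ?_⟩
  · rw [show a + b + j - k = a + b + (j - k) by omega, getD_mountain_append_add]
    exact htrue k hk
  · rcases Nat.lt_or_ge (upRunL t j) (j + 1) with hlt | hge
    · rw [show a + b + j - upRunL t j = a + b + (j - upRunL t j) by omega,
        getD_mountain_append_add]
      exact hfalse hlt
    · rw [show a + b + j - upRunL t j = a + b - 1 by omega]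
      exact getD_mountain_append_of_le_of_lt t (by omega) (by omega) _

theorem downRunR_mountain_append_add (j : ℕ) :
    downRunR (mountain a b ++ t) (a + b + j) = downRunR t j := by
  simp only [downRunR, length_append, length_mountain, add_assoc, Nat.add_sub_add_left]
  simp only [← add_assoc a, getD_mountain_append_add]

theorem isPeakB_mountain_append_of_lt (ha : 0 < a) (hb : 0 < b) {i : ℕ} (hi : i < a + b) :
    isPeakB (mountain a b ++ t) i = decide (i = a - 1) := by
  unfold isPeakB
  rcases lt_trichotomy (i + 1) a with h | h | h
  · rw [getD_mountain_append_of_lt t h, Bool.not_true, Bool.and_false]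
    exact (decide_eq_false (by omega)).symm
  · rw [getD_mountain_append_of_lt t (by omega), h,
      getD_mountain_append_of_le_of_lt t le_rfl (by omega)]
    exact (decide_eq_true (by omega)).symm
  · rw [getD_mountain_append_of_le_of_lt t (by omega) hi, Bool.false_and]
    exact (decide_eq_false (by omega)).symm

theorem isPeakB_mountain_append_add (j : ℕ) :
    isPeakB (mountain a b ++ t) (a + b + j) = isPeakB t j := by
  rw [isPeakB, isPeakB, getD_mountain_append_add, add_assoc, getD_mountain_append_add]

theorem isValleyB_mountain_append_of_lt (hb : 0 < b) {i : ℕ} (hi : i < a + b) :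
    isValleyB (mountain a b ++ t) i = (decide (i = a + b - 1) && t.getD 0 false) := by
  unfold isValleyB
  rcases lt_or_ge i a with h | h
  · rw [getD_mountain_append_of_lt t h, Bool.not_true, Bool.false_and, decide_eq_false (by omega),
      Bool.false_and]
  rcases lt_or_eq_of_le (Nat.le_sub_one_of_lt hi) with h' | rfl
  · rw [getD_mountain_append_of_le_of_lt t (by omega : a ≤ i + 1) (by omega), Bool.and_false,
      decide_eq_false (by omega), Bool.false_and]
  · rw [getD_mountain_append_of_le_of_lt t h hi, Nat.sub_add_cancel (by omega),
      ← add_zero (a + b), getD_mountain_append_add, decide_eq_true rfl]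
    rfl

theorem isValleyB_mountain_append_add (j : ℕ) :
    isValleyB (mountain a b ++ t) (a + b + j) = isValleyB t j := by
  rw [isValleyB, isValleyB, getD_mountain_append_add, add_assoc, getD_mountain_append_add]

theorem isSymPeakB_mountain_append (ha : 0 < a) (hb : 0 < b) (ht : t.getD 0 true = true) :
    isSymPeakB (mountain a b ++ t) (a - 1) = (a == b) := by
  rw [isSymPeakB, isPeakB_mountain_append_of_lt t ha hb (by omega), upRunL_mountain_append t ha,
    Nat.sub_add_cancel ha, downRunR_mountain_append t ht]
  simp

theorem isSymPeakB_mountain_append_add (hb : 0 < b) (j : ℕ) :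
    isSymPeakB (mountain a b ++ t) (a + b + j) = isSymPeakB t j := by
  rw [isSymPeakB, isPeakB_mountain_append_add, upRunL_mountain_append_add t hb, add_assoc,
    downRunR_mountain_append_add, isSymPeakB]

theorem peakList_mountain_append (ha : 0 < a) (hb : 0 < b) :
    peakList (mountain a b ++ t) = (a - 1) :: (peakList t).map (a + b + ·) := by
  rw [peakList, length_append, length_mountain, range_add, filter_append, filter_map,
    filter_congr fun i hi => isPeakB_mountain_append_of_lt t ha hb (mem_range.mp hi),
    filter_range_eq_singleton (by omega)]
  simp only [Function.comp_def, isPeakB_mountain_append_add]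
  rfl

theorem valleyHeights_mountain_append (hb : 0 < b) :
    valleyHeights (mountain a b ++ t) =
      (if t.getD 0 false then [(a - b : ℤ)] else []) ++
        (valleyHeights t).map ((a - b : ℤ) + ·) := by
  have hvalleys : valleyList (mountain a b ++ t) =
      (if t.getD 0 false then [a + b - 1] else []) ++ (valleyList t).map (a + b + ·) := by
    rw [valleyList, length_append, length_mountain, range_add, filter_append, filter_map,
      filter_congr fun i hi => isValleyB_mountain_append_of_lt t hb (mem_range.mp hi)]
    simp only [Function.comp_def, isValleyB_mountain_append_add]
    cases t.getD 0 false
    · simp [valleyList]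
    · simp only [Bool.and_true, filter_range_eq_singleton (by omega : a + b - 1 < a + b)]
      rfl
  have hjunction : hgt (mountain a b ++ t) (a + b - 1 + 1) = a - b := by
    rw [Nat.sub_add_cancel (by omega), ← add_zero (a + b), hgt_mountain_append_add]
    simp [hgt]
  rw [valleyHeights, hvalleys, map_append, map_map]
  have hshift : ∀ i, hgt (mountain a b ++ t) (a + b + i + 1) = (a - b : ℤ) + hgt t (i + 1) :=
    fun i => by rw [add_assoc, hgt_mountain_append_add]
  split <;> simp [Function.comp_def, hjunction, hshift, valleyHeights]

theorem map_isSymPeakB_peakList_mountain_append (ha : 0 < a) (hb : 0 < b)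
    (ht : t.getD 0 true = true) :
    (peakList (mountain a b ++ t)).map (isSymPeakB (mountain a b ++ t)) =
      (a == b) :: (peakList t).map (isSymPeakB t) := by
  simp [peakList_mountain_append t ha hb, isSymPeakB_mountain_append t ha hb ht,
    Function.comp_def, isSymPeakB_mountain_append_add t hb]

end MountainAppend

section Mountains

variable {L : List (ℕ × ℕ)}

@[simp]
theorem mountains_nil : mountains [] = [] := rfl

@[simp]
theorem mountains_cons (p : ℕ × ℕ) : mountains (p :: L) = mountain p.1 p.2 ++ mountains L :=
  flatMap_cons

theorem getD_zero_mountains (hL : ∀ p ∈ L, 0 < p.1 ∧ 0 < p.2) :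
    (mountains L).getD 0 true = true := by
  cases L with
  | nil => rfl
  | cons p L => exact getD_mountain_append_of_lt _ (hL p mem_cons_self).1 _

theorem map_isSymPeakB_peakList_mountains (hL : ∀ p ∈ L, 0 < p.1 ∧ 0 < p.2) :
    (peakList (mountains L)).map (isSymPeakB (mountains L)) = L.map fun p => p.1 == p.2 := by
  induction L with
  | nil => rfl
  | cons p L ih =>
    have hL' : ∀ q ∈ L, 0 < q.1 ∧ 0 < q.2 := fun q hq => hL q (mem_cons_of_mem _ hq)
    obtain ⟨ha, hb⟩ := hL p mem_cons_self
    rw [mountains_cons, map_isSymPeakB_peakList_mountain_append _ ha hb (getD_zero_mountains hL'),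
      ih hL', map_cons]

theorem valleyHeights_mountains (hL : ∀ p ∈ L, 0 < p.1 ∧ 0 < p.2) :
    valleyHeights (mountains L) =
      ((L.map fun p => (p.1 - p.2 : ℤ)).dropLast.scanl (· + ·) 0).tail := by
  induction L with
  | nil => rfl
  | cons p L ih =>
    have hL' : ∀ q ∈ L, 0 < q.1 ∧ 0 < q.2 := fun q hq => hL q (mem_cons_of_mem _ hq)
    rw [mountains_cons, valleyHeights_mountain_append _ (hL p mem_cons_self).2, ih hL']
    cases L with
    | nil => rfl
    | cons q L =>
      rw [mountains_cons, getD_mountain_append_of_lt _ (hL' q mem_cons_self).1, if_pos rfl,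
        map_cons (a := p), dropLast_cons_of_ne_nil (by simp), scanl_cons, tail_cons, zero_add,
        scanl_add_eq_map (p.1 - p.2 : ℤ)]
      cases (map (fun p => (p.1 - p.2 : ℤ)) (q :: L)).dropLast <;> simp [scanl_cons]

theorem spPrime_mountains (hL : ∀ p ∈ L, 0 < p.1 ∧ 0 < p.2) :
    spPrime (mountains L) = ((L.map fun p => p.1 == p.2).tail.dropLast).count true := by
  rw [spPrime, valleyHeights_mountains hL, eqAdjCount_tail_scanl_add_zero, tail_dropLast,
    ← map_tail, ← map_dropLast, ← map_tail, ← map_dropLast, count, count, countP_map, countP_map]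
  refine countP_congr fun p _ => ?_
  simp [sub_eq_zero]

end Mountains

/-- The leading `d`s make this inductive: prefixing `u` to `d^c ⋯` opens the mountain `u d^c`
when `c > 0`, and heightens the first mountain when `c = 0`. -/
theorem exists_eq_replicate_append_mountains (w : List Bool) (hw : w.getLast? ≠ some true) :
    ∃ c L, (∀ p ∈ L, 0 < p.1 ∧ 0 < p.2) ∧ w = replicate c false ++ mountains L := by
  induction w with
  | nil => exact ⟨0, [], by simp, rfl⟩
  | cons x w ih =>
    have hw' : w.getLast? ≠ some true := by
      cases w with
      | nil => simp
      | cons y w => rwa [getLast?_cons_cons] at hw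
    obtain ⟨c, L, hL, rfl⟩ := ih hw'
    cases x
    · exact ⟨c + 1, L, hL, by simp [replicate_succ]⟩
    rcases c with _ | c
    · rcases L with _ | ⟨⟨a, b⟩, L⟩
      · simp at hw
      refine ⟨0, (a + 1, b) :: L, ?_, by simp [mountain, replicate_succ]⟩
      simp only [mem_cons, forall_eq_or_imp] at hL ⊢
      exact ⟨⟨a.succ_pos, hL.1.2⟩, hL.2⟩
    · refine ⟨0, (1, c + 1) :: L, ?_, by simp [mountain, replicate_succ]⟩
      simpa using hL

theorem IsDyckWord.head?_ne_some_false {w : List Bool} (hw : IsDyckWord w) :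
    w.head? ≠ some false := by
  intro h
  obtain ⟨v, rfl⟩ : ∃ v, w = false :: v := by
    cases w with
    | nil => simp at h
    | cons x v => exact ⟨v, by simpa using h⟩
  have := hw.2 1
  simp [hgt] at this

theorem IsDyckWord.getLast?_ne_some_true {w : List Bool} (hw : IsDyckWord w) :
    w.getLast? ≠ some true := by
  intro h
  obtain ⟨v, rfl⟩ : ∃ v, w = v ++ [true] := by
    rcases eq_nil_or_concat w with rfl | ⟨v, x, rfl⟩
    · simp at h
    · exact ⟨v, by simp_all⟩
  have hcount : v.count true + 1 = v.count false := by simpa using hw.1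
  have hprefix : (v.count false : ℤ) ≤ v.count true := by simpa [hgt] using hw.2 v.length
  omega

theorem IsDyckWord.exists_eq_mountains {w : List Bool} (hw : IsDyckWord w) :
    ∃ L : List (ℕ × ℕ), (∀ p ∈ L, 0 < p.1 ∧ 0 < p.2) ∧ w = mountains L := by
  obtain ⟨c, L, hL, rfl⟩ := exists_eq_replicate_append_mountains w hw.getLast?_ne_some_true
  rcases c with _ | c
  · exact ⟨L, hL, by simp⟩
  · exact absurd (by simp [replicate_succ]) hw.head?_ne_some_false

/-- For every Dyck path `w`, the number of pairs of consecutive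
valleys at the same height equals the number of symmetric peaks of `w` that are
neither the first nor the last peak; the two statistics differ exactly when `w`
starts or ends with a symmetric peak (i.e. its first or last peak is symmetric). -/
theorem spPrime_eq_interior_symmetric_peaks (w : List Bool) (hw : IsDyckWord w) :
    spPrime w =
      ((List.range (peakList w).length).filter
        (fun j => decide (0 < j) && decide (j + 1 < (peakList w).length) &&
          isSymPeakB w ((peakList w).getD j 0))).length ∧
    (spPrime w ≠ spCount w ↔
      ((∃ p ∈ (peakList w).head?, isSymPeakB w p = true) ∨
       (∃ p ∈ (peakList w).getLast?, isSymPeakB w p = true))) := by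
  obtain ⟨L, hL, rfl⟩ := hw.exists_eq_mountains
  rw [length_filter_range_interior, spCount_eq_count, spPrime_mountains hL,
    ← map_isSymPeakB_peakList_mountains hL]
  refine ⟨rfl, ?_⟩
  rw [count_tail_dropLast_ne_count_iff, head?_map, getLast?_map]
  simp
end

section
/- For every Dyck path, a valley is symmetric if and only if the two peaks immediately surrounding it (the peak before and the peak after the valley) have equal height; hence the number of symmetric valleys equals the number of pairs of consecutive peaks at the same height. -/
/-!
Between a valley `i` and the peak `p` just before it there are only down-steps, and between
`i` and the next peak `q` only up-steps. So the maximal `d^a u^b` through the valley has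
`a = i - p` and `b = q - i`, and the two peaks lie exactly `a` and `b` above the valley: the
valley is symmetric iff the peaks have equal height, and then `i = (p + q) / 2`. In a Dyck path
every valley has a peak on each side, and two consecutive peaks enclose a valley, so
`(p, q) ↦ (p + q) / 2` matches equal-height consecutive peaks with symmetric valleys.
-/

theorem Nat.exists_last_change {P : ℕ → Prop} {a b : ℕ} (ha : P a) (hb : ¬P b) (hab : a < b) :
    ∃ r, a ≤ r ∧ r < b ∧ P r ∧ ∀ s, r < s → s ≤ b → ¬P s := by
  induction b, hab using Nat.le_induction with
  | base => exact ⟨a, le_rfl, a.lt_succ_self, ha, fun s h1 h2 => by rwa [show s = a + 1 by omega]⟩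
  | succ b hab ih =>
    by_cases hPb : P b
    · exact ⟨b, by omega, b.lt_succ_self, hPb, fun s h1 h2 => by rwa [show s = b + 1 by omega]⟩
    · obtain ⟨r, har, hrb, hr, hnot⟩ := ih hPb
      refine ⟨r, har, by omega, hr, fun s h1 h2 => ?_⟩
      rcases (show s ≤ b ∨ s = b + 1 by omega) with h | rfl
      exacts [hnot s h1 h, hb]

theorem Nat.exists_first_change {P : ℕ → Prop} {a b : ℕ} (ha : P a) (hb : ¬P b) (hab : a < b) :
    ∃ r, a ≤ r ∧ r < b ∧ ¬P (r + 1) ∧ ∀ s, a ≤ s → s ≤ r → P s := by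
  obtain ⟨n, rfl⟩ : ∃ n, b = a + n + 1 := ⟨b - a - 1, by omega⟩
  induction n generalizing a with
  | zero => exact ⟨a, le_rfl, by omega, hb, fun s h1 h2 => by rwa [show s = a by omega]⟩
  | succ n ih =>
    by_cases hPa : P (a + 1)
    · obtain ⟨r, har, hrb, hr, hall⟩ :=
        ih hPa (by rwa [show a + 1 + n + 1 = a + (n + 1) + 1 by omega]) (by omega)
      refine ⟨r, by omega, by omega, hr, fun s h1 h2 => ?_⟩
      rcases h1.eq_or_lt with rfl | h1
      exacts [ha, hall s h1 h2]
    · exact ⟨a, le_rfl, by omega, hPa, fun s h1 h2 => by rwa [show s = a by omega]⟩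

theorem List.length_takeWhile_range {p : ℕ → Bool} {m n : ℕ} (hmn : m < n)
    (hlt : ∀ k < m, p k = true) (hm : p m = false) : ((List.range n).takeWhile p).length = m := by
  obtain ⟨n, rfl⟩ : ∃ k, n = m + 1 + k := ⟨n - m - 1, by omega⟩
  rw [List.range_add, List.range_succ, List.append_assoc, List.takeWhile_append_of_pos]
  · simp [hm]
  · simpa using hlt

theorem List.Nodup.zip_tail {α : Type*} {l : List α} (hl : l.Nodup) : (l.zip l.tail).Nodup :=
  List.Nodup.of_map Prod.snd <| by
    rw [List.map_snd_zip (by simp)]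
    exact hl.sublist (List.tail_sublist l)

theorem List.Pairwise.mem_zip_tail_iff {α : Type*} [LinearOrder α] {l : List α}
    (hl : l.Pairwise (· < ·)) {a b : α} :
    (a, b) ∈ l.zip l.tail ↔ a ∈ l ∧ b ∈ l ∧ a < b ∧ ∀ c ∈ l, a < c → ¬c < b := by
  induction l with
  | nil => simp
  | cons x l ih =>
    rw [List.pairwise_cons] at hl
    cases l with
    | nil => simp +contextual
    | cons y t =>
      have hzip : (x :: y :: t).zip (x :: y :: t).tail = (x, y) :: (y :: t).zip (y :: t).tail := rfl
      have := (List.pairwise_cons.mp hl.2).1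
      rw [hzip, List.mem_cons, ih hl.2]
      grind

def IsUp (w : List Bool) (r : ℕ) : Prop := w[r]? = some true
def IsDown (w : List Bool) (r : ℕ) : Prop := w[r]? = some false

section Steps

variable {w : List Bool} {i r : ℕ}

theorem IsUp.lt_length (h : IsUp w r) : r < w.length := by
  by_contra hr; simp_all [IsUp]

theorem IsDown.lt_length (h : IsDown w r) : r < w.length := by
  by_contra hr; simp_all [IsDown]

theorem IsUp.not_isDown (h : IsUp w r) : ¬IsDown w r := by
  simp_all [IsUp, IsDown]

theorem IsDown.not_isUp (h : IsDown w r) : ¬IsUp w r := by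
  simp_all [IsUp, IsDown]

theorem isDown_iff_not_isUp (hr : r < w.length) : IsDown w r ↔ ¬IsUp w r := by
  simp [IsUp, IsDown, List.getElem?_eq_getElem hr]

theorem isPeakB_eq_true_iff : isPeakB w i = true ↔ IsUp w i ∧ IsDown w (i + 1) := by
  simp only [isPeakB, IsUp, IsDown, List.getD_eq_getElem?_getD]
  cases w[i]? <;> cases w[i + 1]? <;> simp

theorem isPeakB_eq_false_iff : isPeakB w i = false ↔ ¬(IsUp w i ∧ IsDown w (i + 1)) := by
  rw [← isPeakB_eq_true_iff]; simp

theorem isValleyB_eq_true_iff : isValleyB w i = true ↔ IsDown w i ∧ IsUp w (i + 1) := by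
  simp only [isValleyB, IsUp, IsDown, List.getD_eq_getElem?_getD]
  cases w[i]? <;> cases w[i + 1]? <;> simp

theorem isValleyB_of_isSymValleyB (h : isSymValleyB w i = true) : isValleyB w i = true := by
  simp only [isSymValleyB, Bool.and_eq_true] at h
  exact h.1

theorem hgt_succ_of_isUp (h : IsUp w r) : hgt w (r + 1) = hgt w r + 1 := by
  rw [hgt, hgt, List.take_add_one, show w[r]? = some true from h]
  grind

theorem hgt_succ_of_isDown (h : IsDown w r) : hgt w (r + 1) = hgt w r - 1 := by
  rw [hgt, hgt, List.take_add_one, show w[r]? = some false from h]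
  grind

theorem hgt_add_of_forall_isUp {j m : ℕ} (h : ∀ r, j ≤ r → r < j + m → IsUp w r) :
    hgt w (j + m) = hgt w j + m := by
  induction m with
  | zero => simp
  | succ m ih =>
    rw [← add_assoc, hgt_succ_of_isUp (h _ le_self_add (by omega)),
      ih fun r h1 h2 => h r h1 (by omega)]
    push_cast; ring

theorem hgt_add_of_forall_isDown {j m : ℕ} (h : ∀ r, j ≤ r → r < j + m → IsDown w r) :
    hgt w (j + m) = hgt w j - m := by
  induction m with
  | zero => simp
  | succ m ih =>
    rw [← add_assoc, hgt_succ_of_isDown (h _ le_self_add (by omega)),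
      ih fun r h1 h2 => h r h1 (by omega)]
    push_cast; ring

theorem IsDyckWord.isUp_zero (hw : IsDyckWord w) (h0 : 0 < w.length) : IsUp w 0 := by
  by_contra hu
  have := hgt_succ_of_isDown ((isDown_iff_not_isUp h0).mpr hu)
  have := hw.2 1
  simp_all [hgt]

theorem IsDyckWord.isDown_last (hw : IsDyckWord w) (h0 : 0 < w.length) :
    IsDown w (w.length - 1) := by
  rw [isDown_iff_not_isUp (by omega)]
  intro hu
  have hstep := hgt_succ_of_isUp hu
  have hend : hgt w w.length = 0 := by simp [hgt, hw.1]
  have := hw.2 (w.length - 1)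
  rw [Nat.sub_add_cancel h0, hend] at hstep
  omega

theorem exists_isPeakB_of_isUp_of_isDown {a b : ℕ} (ha : IsUp w a) (hb : IsDown w b)
    (hab : a < b) : ∃ r, a ≤ r ∧ r < b ∧ isPeakB w r = true := by
  obtain ⟨r, har, hrb, hr, hnext⟩ := Nat.exists_last_change ha hb.not_isUp hab
  exact ⟨r, har, hrb, isPeakB_eq_true_iff.mpr
    ⟨hr, (isDown_iff_not_isUp (by have := hb.lt_length; omega)).mpr (hnext _ r.lt_succ_self hrb)⟩⟩

theorem forall_isDown_of_forall_isPeakB_eq_false {p : ℕ} (hi : IsDown w i)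
    (h : ∀ r, p < r → r < i → isPeakB w r = false) : ∀ r, p < r → r ≤ i → IsDown w r := by
  intro r hpr hri
  rw [isDown_iff_not_isUp (hri.trans_lt hi.lt_length)]
  intro hr
  have hri' : r < i := lt_of_le_of_ne hri fun hre => hr.not_isDown (hre ▸ hi)
  obtain ⟨s, hrs, hsi, hs⟩ := exists_isPeakB_of_isUp_of_isDown hr hi hri'
  simp [h s (by omega) hsi] at hs

theorem forall_isUp_of_forall_isPeakB_eq_false {q : ℕ} (hi : IsUp w (i + 1)) (hq : q < w.length)
    (h : ∀ r, i < r → r < q → isPeakB w r = false) : ∀ r, i < r → r ≤ q → IsUp w r := by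
  intro r hir hrq
  by_contra hr
  have hr' := (isDown_iff_not_isUp (hrq.trans_lt hq)).mpr hr
  have hir' : i + 1 < r := lt_of_le_of_ne hir fun hre => hi.not_isDown (hre ▸ hr')
  obtain ⟨s, his, hsr, hs⟩ := exists_isPeakB_of_isUp_of_isDown hi hr' hir'
  simp [h s (by omega) (by omega)] at hs

end Steps

structure IsValleyBetween (w : List Bool) (p i q : ℕ) : Prop where
  isValleyB : isValleyB w i = true
  isPeakB_left : isPeakB w p = true
  lt_left : p < i
  noPeak_left : ∀ r, p < r → r < i → isPeakB w r = false
  isPeakB_right : isPeakB w q = true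
  lt_right : i < q
  noPeak_right : ∀ r, i < r → r < q → isPeakB w r = false

namespace IsValleyBetween

variable {w : List Bool} {p i q : ℕ}

theorem isDown (h : IsValleyBetween w p i q) : ∀ r, p < r → r ≤ i → IsDown w r :=
  forall_isDown_of_forall_isPeakB_eq_false (isValleyB_eq_true_iff.mp h.isValleyB).1 h.noPeak_left

theorem isUp (h : IsValleyBetween w p i q) : ∀ r, i < r → r ≤ q → IsUp w r :=
  forall_isUp_of_forall_isPeakB_eq_false (isValleyB_eq_true_iff.mp h.isValleyB).2
    (isPeakB_eq_true_iff.mp h.isPeakB_right).1.lt_length h.noPeak_right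

theorem downRunL_eq (h : IsValleyBetween w p i q) : downRunL w i = i - p := by
  have hp : w[p]? = some true := (isPeakB_eq_true_iff.mp h.isPeakB_left).1
  have := h.lt_left
  refine List.length_takeWhile_range (by omega) (fun k hk => ?_) ?_
  · have hd : w[i - k]? = some false := h.isDown (i - k) (by omega) (by omega)
    simp [List.getD_eq_getElem?_getD, hd]
  · simp [List.getD_eq_getElem?_getD, show i - (i - p) = p by omega, hp]

theorem upRunR_eq (h : IsValleyBetween w p i q) : upRunR w (i + 1) = q - i := by
  have hq : IsDown w (q + 1) := (isPeakB_eq_true_iff.mp h.isPeakB_right).2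
  have := h.lt_right
  refine List.length_takeWhile_range (by have := hq.lt_length; omega) (fun k hk => ?_) ?_
  · have hu : w[i + 1 + k]? = some true := h.isUp (i + 1 + k) (by omega) (by omega)
    simp [List.getD_eq_getElem?_getD, hu]
  · simp [List.getD_eq_getElem?_getD, show i + 1 + (q - i) = q + 1 by omega,
    show w[q + 1]? = some false from hq]

theorem isSymValleyB_iff (h : IsValleyBetween w p i q) :
    isSymValleyB w i = true ↔ i - p = q - i := by
  simp [isSymValleyB, h.isValleyB, h.downRunL_eq, h.upRunR_eq]

theorem hgt_left (h : IsValleyBetween w p i q) : hgt w (p + 1) = hgt w (i + 1) + (i - p : ℕ) := by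
  have hpi := h.lt_left
  have hrun := hgt_add_of_forall_isDown (j := p + 1) (m := i - p)
    fun r h1 h2 => h.isDown r (by omega) (by omega)
  rw [show p + 1 + (i - p) = i + 1 by omega] at hrun
  omega

theorem hgt_right (h : IsValleyBetween w p i q) : hgt w (q + 1) = hgt w (i + 1) + (q - i : ℕ) := by
  have hiq := h.lt_right
  have hrun := hgt_add_of_forall_isUp (j := i + 1) (m := q - i)
    fun r h1 h2 => h.isUp r (by omega) (by omega)
  rwa [show i + 1 + (q - i) = q + 1 by omega] at hrun

theorem eq_midpoint (h : IsValleyBetween w p i q) (hs : isSymValleyB w i = true) :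
    i = (p + q) / 2 := by
  have := h.isSymValleyB_iff.mp hs; have := h.lt_left; have := h.lt_right
  omega

theorem unique {p' q' : ℕ} (h : IsValleyBetween w p i q) (h' : IsValleyBetween w p' i q') :
    p = p' ∧ q = q' := by
  have := h.downRunL_eq; have := h'.downRunL_eq; have := h.upRunR_eq; have := h'.upRunR_eq
  have := h.lt_left; have := h'.lt_left; have := h.lt_right; have := h'.lt_right
  omega

theorem isSymValleyB_iff_hgt_eq (h : IsValleyBetween w p i q) :
    isSymValleyB w i = true ↔ hgt w (p + 1) = hgt w (q + 1) := by
  rw [h.isSymValleyB_iff, h.hgt_left, h.hgt_right]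
  omega

end IsValleyBetween

section Dyck

variable {w : List Bool} {i : ℕ}

theorem IsDyckWord.exists_nearest_peak_left (hw : IsDyckWord w) (hi : IsDown w i) :
    ∃ p < i, isPeakB w p = true ∧ ∀ r, p < r → r < i → isPeakB w r = false := by
  have h0 := hw.isUp_zero (by have := hi.lt_length; omega)
  have hi0 : 0 < i := Nat.pos_of_ne_zero fun h => h0.not_isDown (h ▸ hi)
  obtain ⟨p, -, hpi, hp, hnot⟩ := Nat.exists_last_change h0 hi.not_isUp hi0
  refine ⟨p, hpi, isPeakB_eq_true_iff.mpr ⟨hp, ?_⟩, fun r h1 h2 => ?_⟩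
  · exact (isDown_iff_not_isUp (by have := hi.lt_length; omega)).mpr (hnot _ p.lt_succ_self hpi)
  · exact isPeakB_eq_false_iff.mpr fun hr => hnot r h1 h2.le hr.1

theorem IsDyckWord.exists_nearest_peak_right (hw : IsDyckWord w) (hi : IsUp w (i + 1)) :
    ∃ q, i < q ∧ isPeakB w q = true ∧ ∀ r, i < r → r < q → isPeakB w r = false := by
  have hlen := hi.lt_length
  have hlast := hw.isDown_last (by omega)
  have hi1 : i + 1 < w.length - 1 :=
    lt_of_le_of_ne (by omega) fun h => hi.not_isDown (h ▸ hlast)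
  obtain ⟨q, hiq, hq, hnot, hall⟩ := Nat.exists_first_change hi hlast.not_isUp hi1
  refine ⟨q, by omega, isPeakB_eq_true_iff.mpr ⟨hall q hiq le_rfl, ?_⟩, fun r h1 h2 => ?_⟩
  · exact (isDown_iff_not_isUp (by omega)).mpr hnot
  · exact isPeakB_eq_false_iff.mpr fun hr => (hall (r + 1) (by omega) (by omega)).not_isDown hr.2

theorem IsDyckWord.exists_isValleyBetween (hw : IsDyckWord w) (hv : isValleyB w i = true) :
    ∃ p q, IsValleyBetween w p i q := by
  obtain ⟨hd, hu⟩ := isValleyB_eq_true_iff.mp hv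
  obtain ⟨p, hpi, hp, hnp⟩ := hw.exists_nearest_peak_left hd
  obtain ⟨q, hiq, hq, hnq⟩ := hw.exists_nearest_peak_right hu
  exact ⟨p, q, hv, hp, hpi, hnp, hq, hiq, hnq⟩

end Dyck

structure ConsecutivePeaks (w : List Bool) (p q : ℕ) : Prop where
  isPeakB_left : isPeakB w p = true
  isPeakB_right : isPeakB w q = true
  lt : p < q
  noPeak : ∀ r, p < r → r < q → isPeakB w r = false

section PeakPairs

variable {w : List Bool} {p i q : ℕ}

theorem IsValleyBetween.consecutivePeaks (h : IsValleyBetween w p i q) : ConsecutivePeaks w p q where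
  isPeakB_left := h.isPeakB_left
  isPeakB_right := h.isPeakB_right
  lt := h.lt_left.trans h.lt_right
  noPeak r h1 h2 := by
    rcases lt_trichotomy r i with hri | rfl | hir
    · exact h.noPeak_left r h1 hri
    · exact isPeakB_eq_false_iff.mpr fun hr => hr.1.not_isDown (isValleyB_eq_true_iff.mp h.isValleyB).1
    · exact h.noPeak_right r hir h2

theorem ConsecutivePeaks.exists_isValleyBetween (h : ConsecutivePeaks w p q) :
    ∃ i, IsValleyBetween w p i q := by
  have hp := (isPeakB_eq_true_iff.mp h.isPeakB_left).2
  have hq := (isPeakB_eq_true_iff.mp h.isPeakB_right).1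
  have hpq : p + 1 < q := lt_of_le_of_ne h.lt fun he => hq.not_isDown (he ▸ hp)
  obtain ⟨i, hpi, hiq, hi, hnext⟩ := Nat.exists_last_change hp hq.not_isDown hpq
  have hi1 : IsUp w (i + 1) := by
    by_contra hu
    exact hnext (i + 1) i.lt_succ_self hiq
      ((isDown_iff_not_isUp (by have := hq.lt_length; omega)).mpr hu)
  exact ⟨i, isValleyB_eq_true_iff.mpr ⟨hi, hi1⟩, h.isPeakB_left, by omega,
    fun r h1 h2 => h.noPeak r h1 (by omega), h.isPeakB_right, by omega,
    fun r h1 h2 => h.noPeak r (by omega) h2⟩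

theorem mem_peakList : i ∈ peakList w ↔ isPeakB w i = true := by
  simp only [peakList, List.mem_filter, List.mem_range, and_iff_right_iff_imp]
  exact fun h => (isPeakB_eq_true_iff.mp h).1.lt_length

theorem mem_zip_peakList_iff :
    (p, q) ∈ (peakList w).zip (peakList w).tail ↔ ConsecutivePeaks w p q := by
  have hsorted : (peakList w).Pairwise (· < ·) := List.pairwise_lt_range.filter _
  rw [hsorted.mem_zip_tail_iff, mem_peakList, mem_peakList]
  constructor
  · rintro ⟨hp, hq, hpq, hno⟩
    exact ⟨hp, hq, hpq, fun r h1 h2 => by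
      by_contra hr; exact hno r (mem_peakList.mpr (by simpa using hr)) h1 h2⟩
  · rintro ⟨hp, hq, hpq, hno⟩
    exact ⟨hp, hq, hpq, fun r hr h1 h2 => by simp [hno r h1 h2, mem_peakList] at hr⟩

end PeakPairs

theorem svalCount_eq_eqAdjCount_peakHeights {w : List Bool} (hw : IsDyckWord w) :
    svalCount w = eqAdjCount (peakHeights w) := by
  set pairs := ((peakList w).zip (peakList w).tail).filter
    fun pq => decide (hgt w (pq.1 + 1) = hgt w (pq.2 + 1))
  have hpairs : eqAdjCount (peakHeights w) = pairs.length := by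
    rw [eqAdjCount, peakHeights, ← List.map_tail, List.zip_map, List.filter_map, List.length_map]
    rfl
  have hnodup : pairs.Nodup := (List.nodup_range.filter _).zip_tail.filter _
  have hmem_pairs {p q : ℕ} :
      (p, q) ∈ pairs.toFinset ↔ ConsecutivePeaks w p q ∧ hgt w (p + 1) = hgt w (q + 1) := by
    simp [pairs, mem_zip_peakList_iff]
  have hmem_sym {i : ℕ} : i ∈ ((List.range w.length).filter (isSymValleyB w)).toFinset ↔
      isSymValleyB w i = true := by
    simp only [List.mem_toFinset, List.mem_filter, List.mem_range, and_iff_right_iff_imp]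
    exact fun h => (isValleyB_eq_true_iff.mp (isValleyB_of_isSymValleyB h)).1.lt_length
  rw [hpairs, svalCount, ← List.toFinset_card_of_nodup (List.nodup_range.filter _),
    ← List.toFinset_card_of_nodup hnodup]
  refine (Finset.card_nbij (fun pq => (pq.1 + pq.2) / 2) ?_ ?_ ?_).symm
  · rintro ⟨p, q⟩ hpq
    obtain ⟨hcons, hhgt⟩ := hmem_pairs.mp hpq
    obtain ⟨i, hi⟩ := hcons.exists_isValleyBetween
    have hs := hi.isSymValleyB_iff_hgt_eq.mpr hhgt
    simpa [← hi.eq_midpoint hs] using hmem_sym.mpr hs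
  · rintro ⟨p, q⟩ hpq ⟨p', q'⟩ hpq' heq
    obtain ⟨i, hi⟩ := (hmem_pairs.mp hpq).1.exists_isValleyBetween
    obtain ⟨i', hi'⟩ := (hmem_pairs.mp hpq').1.exists_isValleyBetween
    have hs := hi.isSymValleyB_iff_hgt_eq.mpr (hmem_pairs.mp hpq).2
    have hs' := hi'.isSymValleyB_iff_hgt_eq.mpr (hmem_pairs.mp hpq').2
    have hii' : i = i' := (hi.eq_midpoint hs).trans (heq.trans (hi'.eq_midpoint hs').symm)
    obtain ⟨rfl, rfl⟩ := hi.unique (hii' ▸ hi')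
    rfl
  · intro i hi
    have hs := hmem_sym.mp hi
    obtain ⟨p, q, hpiq⟩ := hw.exists_isValleyBetween (isValleyB_of_isSymValleyB hs)
    exact ⟨(p, q), hmem_pairs.mpr ⟨hpiq.consecutivePeaks, hpiq.isSymValleyB_iff_hgt_eq.mp hs⟩,
      (hpiq.eq_midpoint hs).symm⟩

/-- In a Dyck path, a valley is symmetric iff the two peaks
immediately surrounding it have equal height; hence the number of symmetric
valleys equals the number of pairs of consecutive peaks at the same height. -/
theorem symValley_iff_surrounding_peaks_same_height (w : List Bool) (hw : IsDyckWord w) :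
    (∀ i p q : ℕ, isValleyB w i = true →
      isPeakB w p = true → p < i → (∀ r, p < r → r < i → isPeakB w r = false) →
      isPeakB w q = true → i < q → (∀ r, i < r → r < q → isPeakB w r = false) →
      (isSymValleyB w i = true ↔ hgt w (p + 1) = hgt w (q + 1))) ∧
    svalCount w = eqAdjCount (peakHeights w) :=
  ⟨fun _ _ _ hv hp hpi hnp hq hiq hnq =>
      IsValleyBetween.isSymValleyB_iff_hgt_eq ⟨hv, hp, hpi, hnp, hq, hiq, hnq⟩,
    svalCount_eq_eqAdjCount_peakHeights hw⟩
end

section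
/- The total number of symmetric peaks over all Dyck paths of semilength n, summed over all n with weight z^n, has generating function (5z − 1 + (1−z)√(1−4z)) / (2(1−z)√(1−4z)). -/
/-!
Erase the peak `ud` of a symmetric mountain `uᵏdᵏ` of a Dyck path of semilength `n + 1`. For
`k ≥ 2` what is left has a symmetric mountain `uᵏ⁻¹dᵏ⁻¹` at that place; for `k = 1` the erased
peak sat at a local minimum of the shorter path, and a path has one more local minimum than it
has peaks. Writing `S n`, `P n` for the total numbers of symmetric peaks and of peaks over the
Dyck paths of semilength `n`, this gives `S (n + 1) = S n + P n + catalan n`. Inserting `ud` at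
any of the `2n + 1` vertices of a path of semilength `n` gives `P (n + 1) = (2n + 1) catalan n`.
In generating functions these read `(1 - z) S = z (P + C)` and `P = z (2 z C' + C)` for the
Catalan series `C = 1 + z C²`, and `√(1 - 4z) = 1 - 2 z C` finishes the computation.
-/

section Runs

variable (w : List Bool)

lemma length_takeWhile_range_succ (p : ℕ → Bool) (m : ℕ) :
    ((List.range (m + 1)).takeWhile p).length =
      if p 0 then ((List.range m).takeWhile fun k => p (k + 1)).length + 1 else 0 := by
  rw [List.range_succ_eq_map]
  cases h : p 0 <;> simp [h, List.takeWhile_map, Function.comp_def]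

lemma upRunL_zero : upRunL w 0 = if w.getD 0 false then 1 else 0 := by
  rw [upRunL, length_takeWhile_range_succ]
  simp

lemma upRunL_succ (i : ℕ) :
    upRunL w (i + 1) = if w.getD (i + 1) false then upRunL w i + 1 else 0 := by
  rw [upRunL, length_takeWhile_range_succ]
  simp only [Nat.sub_zero, Nat.add_sub_add_right]
  rfl

lemma upRunL_eq_zero_iff (i : ℕ) : upRunL w i = 0 ↔ w.getD i false = false := by
  cases i <;> simp [upRunL_zero, upRunL_succ]

lemma downRunR_eq_ite (i : ℕ) :
    downRunR w i = if w.getD i true then 0 else downRunR w (i + 1) + 1 := by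
  rcases le_or_gt w.length i with h | h
  · rw [downRunR, Nat.sub_eq_zero_of_le h, List.getD_eq_default _ _ h]
    simp
  · rw [downRunR, show w.length - i = w.length - (i + 1) + 1 by omega,
      length_takeWhile_range_succ]
    have hshift : (fun k => !w.getD (i + (k + 1)) true) = fun k => !w.getD (i + 1 + k) true := by
      funext k; rw [Nat.add_left_comm, Nat.add_comm k]
    simp only [Nat.add_zero, hshift]
    cases w.getD i true <;> rfl

lemma downRunR_eq_zero_iff (i : ℕ) : downRunR w i = 0 ↔ w.getD i true = true := by
  rw [downRunR_eq_ite]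
  cases w.getD i true <;> simp

lemma upRunL_append_of_lt (v : List Bool) {i : ℕ} (hi : i < w.length) :
    upRunL (w ++ v) i = upRunL w i := by
  unfold upRunL
  congr 2
  funext k
  exact List.getD_append _ _ _ _ (by omega)

lemma downRunR_append_length_add (v : List Bool) (i : ℕ) :
    downRunR (w ++ v) (w.length + i) = downRunR v i := by
  unfold downRunR
  rw [List.length_append, Nat.add_sub_add_left]
  congr 2
  funext k
  rw [Nat.add_assoc, List.getD_append_right _ _ _ _ (by omega), Nat.add_sub_cancel_left]

end Runs

section DyckWords

open Finset

lemma hgt_append_of_le {u : List Bool} {m : ℕ} (t : List Bool) (hm : m ≤ u.length) :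
    hgt (u ++ t) m = hgt u m := by
  simp [hgt, List.take_append_of_le_length hm]

lemma hgt_append_length_add (u t : List Bool) (m : ℕ) :
    hgt (u ++ t) (u.length + m) = hgt u u.length + hgt t m := by
  simp only [hgt, List.take_append, Nat.add_sub_cancel_left,
    List.take_of_length_le (Nat.le_add_right u.length m), List.take_length, List.count_append]
  push_cast
  ring

lemma hgt_cons_succ (b : Bool) (t : List Bool) (m : ℕ) :
    hgt (b :: t) (m + 1) = (if b then 1 else -1) + hgt t m := by
  cases b <;> simp [hgt] <;> ring

lemma isDyckWord_append_ud_iff (u t : List Bool) :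
    IsDyckWord (u ++ true :: false :: t) ↔ IsDyckWord (u ++ t) := by
  have hpeak : hgt (u ++ true :: false :: t) (u.length + 1) = hgt (u ++ t) u.length + 1 := by
    rw [hgt_append_length_add, hgt_cons_succ, hgt_append_of_le t le_rfl]
    simp [hgt]
  have hbeyond : ∀ k, hgt (u ++ true :: false :: t) (u.length + (k + 2)) =
      hgt (u ++ t) (u.length + k) := by
    intro k
    rw [hgt_append_length_add, hgt_append_length_add, hgt_cons_succ, hgt_cons_succ]
    simp
  refine and_congr (by simp [List.count_append]; omega) ⟨fun h m => ?_, fun h m => ?_⟩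
  · rcases le_or_gt m u.length with hm | hm
    · rw [hgt_append_of_le t hm, ← hgt_append_of_le (true :: false :: t) hm]
      exact h m
    · obtain ⟨k, rfl⟩ := Nat.exists_eq_add_of_le hm.le
      rw [← hbeyond]
      exact h _
  · rcases le_or_gt m u.length with hm | hm
    · rw [hgt_append_of_le _ hm, ← hgt_append_of_le t hm]
      exact h m
    · obtain ⟨_ | k, rfl⟩ := Nat.exists_eq_add_of_lt hm
      · have := h u.length
        rw [hpeak]
        omega
      · rw [show u.length + (k + 1) + 1 = u.length + (k + 2) by ring, hbeyond]
        exact h _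

lemma mem_boolLists {w : List Bool} {m : ℕ} : w ∈ boolLists m ↔ w.length = m := by
  refine ⟨fun h => ?_, fun h => ?_⟩
  · obtain ⟨f, -, rfl⟩ := mem_image.mp h
    exact List.length_ofFn
  · subst h
    exact mem_image.mpr ⟨w.get, mem_univ _, List.ofFn_get w⟩

lemma mem_dyckFinset {w : List Bool} {n : ℕ} :
    w ∈ dyckFinset n ↔ w.length = 2 * n ∧ IsDyckWord w := by
  rw [dyckFinset, mem_filter, mem_boolLists]

lemma length_of_mem_dyckFinset {w : List Bool} {n : ℕ} (hw : w ∈ dyckFinset n) :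
    w.length = 2 * n :=
  (mem_dyckFinset.mp hw).1

end DyckWords

section PeakInsertion

def insertUD (v : List Bool) (j : ℕ) : List Bool := v.take j ++ true :: false :: v.drop j

def eraseUD (w : List Bool) (i : ℕ) : List Bool := w.take i ++ w.drop (i + 2)

variable {v w : List Bool} {i j n : ℕ}

lemma isDyckWord_insertUD_iff : IsDyckWord (insertUD v j) ↔ IsDyckWord v := by
  rw [insertUD, isDyckWord_append_ud_iff, List.take_append_drop]

lemma length_insertUD : (insertUD v j).length = v.length + 2 := by
  simp only [insertUD, List.length_append, List.length_take, List.length_cons, List.length_drop]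
  omega

lemma isPeakB_iff : isPeakB w i = true ↔ w.getD i false = true ∧ w.getD (i + 1) true = false := by
  simp [isPeakB]

lemma lt_length_of_isPeakB (h : isPeakB w i = true) : i + 1 < w.length := by
  by_contra hlen
  have hd := (isPeakB_iff.mp h).2
  rw [List.getD_eq_default _ _ (not_lt.mp hlen)] at hd
  exact Bool.noConfusion hd

lemma getD_insertUD_add (hj : j ≤ v.length) (k : ℕ) (d : Bool) :
    (insertUD v j).getD (j + k) d = (true :: false :: v.drop j).getD k d := by
  rw [insertUD, List.getD_append_right _ _ _ _ (by simp), List.length_take_of_le hj,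
    Nat.add_sub_cancel_left]

lemma isPeakB_insertUD (hj : j ≤ v.length) : isPeakB (insertUD v j) j = true := by
  have h0 := getD_insertUD_add hj 0 false
  have h1 := getD_insertUD_add hj 1 true
  simp_all [isPeakB]

lemma insertUD_eq_append : insertUD v j = (v.take j ++ [true, false]) ++ v.drop j := by
  simp [insertUD]

lemma eraseUD_insertUD (hj : j ≤ v.length) : eraseUD (insertUD v j) j = v := by
  have hlen : (v.take j).length = j := List.length_take_of_le hj
  rw [eraseUD, insertUD, List.take_left' hlen, ← insertUD, insertUD_eq_append,
    List.drop_left' (by simp [hlen]), List.take_append_drop]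

lemma insertUD_eraseUD (h : isPeakB w i = true) : insertUD (eraseUD w i) i = w := by
  have hlen := lt_length_of_isPeakB h
  rw [isPeakB_iff, List.getD_eq_getElem _ _ (by omega), List.getD_eq_getElem _ _ hlen] at h
  have hdrop : w.drop i = true :: false :: w.drop (i + 2) := by
    rw [List.drop_eq_getElem_cons (by omega), List.drop_eq_getElem_cons hlen, h.1, h.2]
  simp [insertUD, eraseUD, ← hdrop, show i ≤ w.length by omega]

lemma insertUD_mem_dyckFinset (hv : v ∈ dyckFinset n) (j : ℕ) :
    insertUD v j ∈ dyckFinset (n + 1) := by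
  rw [mem_dyckFinset] at hv ⊢
  rw [length_insertUD, isDyckWord_insertUD_iff, hv.1]
  exact ⟨by ring, hv.2⟩

lemma eraseUD_mem_dyckFinset (hw : w ∈ dyckFinset (n + 1)) (h : isPeakB w i = true) :
    eraseUD w i ∈ dyckFinset n := by
  rw [← insertUD_eraseUD h, mem_dyckFinset, length_insertUD, isDyckWord_insertUD_iff] at hw
  rw [mem_dyckFinset]
  exact ⟨by omega, hw.2⟩

lemma upRunL_insertUD_zero : upRunL (insertUD v 0) 0 = 1 := by
  simp [upRunL_zero, insertUD]

lemma upRunL_insertUD_succ (hi : i + 1 ≤ v.length) :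
    upRunL (insertUD v (i + 1)) (i + 1) = upRunL v i + 1 := by
  have hu : (insertUD v (i + 1)).getD (i + 1) false = true := getD_insertUD_add hi 0 false
  have hprefix : i < (v.take (i + 1)).length := by simp; omega
  rw [upRunL_succ, hu, if_pos rfl, insertUD, upRunL_append_of_lt _ _ hprefix,
    ← upRunL_append_of_lt _ (v.drop (i + 1)) hprefix, List.take_append_drop]

lemma downRunR_insertUD (hj : j ≤ v.length) :
    downRunR (insertUD v j) (j + 1) = downRunR v j + 1 := by
  have hd : (insertUD v j).getD (j + 1) true = false := getD_insertUD_add hj 1 true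
  have hafter := downRunR_append_length_add (v.take j ++ [true, false]) (v.drop j) 0
  have hat := downRunR_append_length_add (v.take j) (v.drop j) 0
  rw [List.length_append, List.length_take_of_le hj] at hafter
  rw [List.length_take_of_le hj, List.take_append_drop, Nat.add_zero] at hat
  rw [downRunR_eq_ite, hd, if_neg Bool.false_ne_true, insertUD_eq_append, hat]
  exact congrArg (· + 1) hafter

end PeakInsertion

section Counting

open Finset

variable {p q : ℕ → Prop} [DecidablePred p] [DecidablePred q]

lemma Nat.count_congr {n : ℕ} (h : ∀ k < n, p k ↔ q k) : Nat.count p n = Nat.count q n := by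
  simp only [Nat.count_eq_card_filter_range]
  exact congrArg card (filter_congr fun k hk => h k (mem_range.mp hk))

lemma Nat.count_or_of_disjoint (h : ∀ k, ¬(p k ∧ q k)) (n : ℕ) :
    Nat.count (fun k => p k ∨ q k) n = Nat.count p n + Nat.count q n := by
  induction n with
  | zero => simp
  | succ n ih =>
    have := h n
    by_cases hp : p n <;> by_cases hq : q n <;> simp_all [Nat.count_succ] <;> omega

lemma Nat.count_nor_add (n : ℕ) :
    Nat.count (fun k => ¬p k ∧ ¬q k) n + Nat.count p n + Nat.count q n =
      n + Nat.count (fun k => p k ∧ q k) n := by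
  induction n with
  | zero => simp
  | succ n ih =>
    by_cases hp : p n <;> by_cases hq : q n <;> simp [Nat.count_succ, hp, hq] <;> omega

lemma length_filter_range_eq_count (b : ℕ → Bool) (m : ℕ) :
    ((List.range m).filter b).length = Nat.count (fun i => b i = true) m := by
  simp [Nat.count, List.countP_eq_length_filter]

lemma count_getD_eq_count (w : List Bool) (b : Bool) :
    Nat.count (fun i => w.getD i (!b) = b) w.length = w.count b := by
  induction w with
  | nil => simp
  | cons a t ih =>
    rw [List.length_cons, Nat.count_succ']
    simp only [List.getD_cons_succ, List.getD_cons_zero, ih, List.count_cons]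
    cases a <;> cases b <;> simp

end Counting

section LocalMinima

/-- For a nonempty path these are its valleys together with its two endpoints. -/
def IsLocalMinVertex (w : List Bool) (j : ℕ) : Prop :=
  ¬(1 ≤ j ∧ w.getD (j - 1) false = true) ∧ ¬w.getD j true = false

instance (w : List Bool) : DecidablePred (IsLocalMinVertex w) := fun _ => by
  unfold IsLocalMinVertex
  infer_instance

lemma isSymPeakB_iff {w : List Bool} {i : ℕ} :
    isSymPeakB w i = true ↔ isPeakB w i = true ∧ upRunL w i = downRunR w (i + 1) := by
  simp [isSymPeakB]

lemma isSymPeakB_insertUD_iff {v : List Bool} {j : ℕ} (hj : j ≤ v.length) :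
    isSymPeakB (insertUD v j) j = true ↔
      IsLocalMinVertex v j ∨ (1 ≤ j ∧ isSymPeakB v (j - 1) = true) := by
  rw [isSymPeakB_iff, and_iff_right (isPeakB_insertUD hj), downRunR_insertUD hj]
  cases j with
  | zero =>
    simp [IsLocalMinVertex, upRunL_insertUD_zero, downRunR_eq_zero_iff]
  | succ i =>
    rw [upRunL_insertUD_succ hj, Nat.add_right_cancel_iff]
    simp only [IsLocalMinVertex, Nat.add_sub_cancel, isSymPeakB_iff, isPeakB_iff]
    cases hu : v.getD i false
    · rw [(upRunL_eq_zero_iff v i).2 hu, eq_comm, downRunR_eq_zero_iff]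
      simp
    · have hup : upRunL v i ≠ 0 := by rw [Ne, upRunL_eq_zero_iff, hu]; decide
      have hdown := downRunR_eq_zero_iff v (i + 1)
      constructor
      · intro h
        exact Or.inr ⟨by omega, ⟨rfl, by simpa [← h, hup] using hdown⟩, h⟩
      · rintro (h | h)
        · simp at h
        · exact h.2.2

lemma count_isLocalMinVertex (w : List Bool) :
    Nat.count (IsLocalMinVertex w) (w.length + 1) = peakCount w + 1 := by
  -- inclusion–exclusion: the vertices both preceded by `u` and followed by `d` are the peaks
  have hnor := Nat.count_nor_add (p := fun j => 1 ≤ j ∧ w.getD (j - 1) false = true)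
    (q := fun j => w.getD j true = false) (w.length + 1)
  have hup : Nat.count (fun j => 1 ≤ j ∧ w.getD (j - 1) false = true) (w.length + 1) =
      w.count true := by
    simpa [Nat.count_succ'] using count_getD_eq_count w true
  have hdown : Nat.count (fun j => w.getD j true = false) (w.length + 1) = w.count false := by
    simpa [Nat.count_succ, List.getD_eq_default] using count_getD_eq_count w false
  have hpeak : Nat.count (fun j => (1 ≤ j ∧ w.getD (j - 1) false = true) ∧
      w.getD j true = false) (w.length + 1) = peakCount w := by
    simp [Nat.count_succ', peakCount, length_filter_range_eq_count, isPeakB_iff]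
  have htotal := List.count_true_add_count_false w
  unfold IsLocalMinVertex
  omega

end LocalMinima

section Catalan

open DyckStep Finset

def boolEquivDyckStep : Bool ≃ DyckStep where
  toFun b := cond b U D
  invFun s := s == U
  left_inv b := by cases b <;> rfl
  right_inv s := by cases s <;> rfl

lemma count_U_map_boolEquivDyckStep (l : List Bool) :
    (l.map boolEquivDyckStep).count U = l.count true :=
  List.count_map_of_injective _ _ boolEquivDyckStep.injective true

lemma count_D_map_boolEquivDyckStep (l : List Bool) :
    (l.map boolEquivDyckStep).count D = l.count false :=
  List.count_map_of_injective _ _ boolEquivDyckStep.injective false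

lemma isDyckWord_iff_map (w : List Bool) :
    IsDyckWord w ↔ (w.map boolEquivDyckStep).count U = (w.map boolEquivDyckStep).count D ∧
      ∀ i, ((w.map boolEquivDyckStep).take i).count D ≤
        ((w.map boolEquivDyckStep).take i).count U := by
  simp only [IsDyckWord, hgt, ← List.map_take, count_U_map_boolEquivDyckStep,
    count_D_map_boolEquivDyckStep, sub_nonneg, Nat.cast_le]

def IsDyckWord.toDyckWord {w : List Bool} (hw : IsDyckWord w) : DyckWord :=
  ⟨_, ((isDyckWord_iff_map w).mp hw).1, ((isDyckWord_iff_map w).mp hw).2⟩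

lemma DyckWord.isDyckWord_map (p : DyckWord) :
    IsDyckWord (p.toList.map boolEquivDyckStep.symm) := by
  rw [isDyckWord_iff_map, List.map_map, boolEquivDyckStep.self_comp_symm, List.map_id]
  exact ⟨p.count_U_eq_count_D, p.count_D_le_count_U⟩

lemma semilength_toDyckWord {w : List Bool} {n : ℕ} (hw : w ∈ dyckFinset n) :
    (mem_dyckFinset.mp hw).2.toDyckWord.semilength = n := by
  have hcount := (mem_dyckFinset.mp hw).2.1
  have htotal := List.count_true_add_count_false w
  rw [length_of_mem_dyckFinset hw] at htotal
  change (w.map boolEquivDyckStep).count U = n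
  rw [count_U_map_boolEquivDyckStep]
  omega

lemma card_dyckFinset (n : ℕ) : #(dyckFinset n) = catalan n := by
  rw [← DyckWord.card_dyckWord_semilength_eq_catalan, ← Fintype.card_coe]
  refine Fintype.card_congr
    { toFun w := ⟨_, semilength_toDyckWord w.2⟩
      invFun p := ⟨p.1.toList.map boolEquivDyckStep.symm, mem_dyckFinset.mpr
        ⟨by rw [List.length_map, ← p.1.two_mul_semilength_eq_length, p.2], p.1.isDyckWord_map⟩⟩
      left_inv w := Subtype.ext ?_
      right_inv p := Subtype.ext (DyckWord.ext ?_) }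
  · change (w.1.map boolEquivDyckStep).map boolEquivDyckStep.symm = w.1
    rw [List.map_map, boolEquivDyckStep.symm_comp_self, List.map_id]
  · change (p.1.toList.map boolEquivDyckStep.symm).map boolEquivDyckStep = p.1.toList
    rw [List.map_map, boolEquivDyckStep.self_comp_symm, List.map_id]

end Catalan

section PairCounting

open Finset

lemma count_isSymPeakB_insertUD (v : List Bool) :
    Nat.count (fun j => isSymPeakB (insertUD v j) j = true) (v.length + 1) =
      peakCount v + 1 + spCount v := by
  have hdisjoint : ∀ j, ¬(IsLocalMinVertex v j ∧ 1 ≤ j ∧ isSymPeakB v (j - 1) = true) :=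
    fun j ⟨hmin, hj, hsym⟩ => hmin.1 ⟨hj, (isPeakB_iff.mp (isSymPeakB_iff.mp hsym).1).1⟩
  rw [Nat.count_congr fun j hj => isSymPeakB_insertUD_iff (Nat.le_of_lt_succ hj),
    Nat.count_or_of_disjoint hdisjoint, count_isLocalMinVertex, Nat.count_succ']
  simp [spCount, length_filter_range_eq_count]

lemma sum_count_eq_card_filter {α : Type*} (s : Finset α) (m : ℕ) (P : α → ℕ → Prop)
    [∀ a, DecidablePred (P a)] :
    ∑ a ∈ s, Nat.count (P a) m = #{q ∈ s ×ˢ range m | P q.1 q.2} := by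
  rw [card_filter, sum_product]
  simp_rw [Nat.count_eq_card_filter_range, card_filter]

/-- Erasing the peak at `i`, inverse to `insertUD`, matches the peaks of the paths of
semilength `n + 1` with the `2n + 1` vertices of the paths of semilength `n`. -/
lemma sum_count_isPeakB_and (n : ℕ) (P : List Bool → ℕ → Prop) [∀ w, DecidablePred (P w)] :
    ∑ w ∈ dyckFinset (n + 1), Nat.count (fun i => isPeakB w i = true ∧ P w i) (2 * (n + 1)) =
      ∑ v ∈ dyckFinset n, Nat.count (fun j => P (insertUD v j) j) (2 * n + 1) := by
  simp only [sum_count_eq_card_filter]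
  symm
  apply card_nbij' (fun q => (insertUD q.1 q.2, q.2)) (fun q => (eraseUD q.1 q.2, q.2))
  · rintro ⟨v, j⟩ hq
    simp only [mem_coe, mem_filter, mem_product, mem_range] at hq ⊢
    obtain ⟨⟨hv, hj⟩, hP⟩ := hq
    have hjv : j ≤ v.length := by rw [length_of_mem_dyckFinset hv]; omega
    exact ⟨⟨insertUD_mem_dyckFinset hv j, by omega⟩, isPeakB_insertUD hjv, hP⟩
  · rintro ⟨w, i⟩ hq
    simp only [mem_coe, mem_filter, mem_product, mem_range] at hq ⊢
    obtain ⟨⟨hw, -⟩, hpeak, hP⟩ := hq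
    have hlen := lt_length_of_isPeakB hpeak
    rw [length_of_mem_dyckFinset hw] at hlen
    exact ⟨⟨eraseUD_mem_dyckFinset hw hpeak, by omega⟩, by rwa [insertUD_eraseUD hpeak]⟩
  · rintro ⟨v, j⟩ hq
    simp only [mem_coe, mem_filter, mem_product, mem_range] at hq
    have hjv : j ≤ v.length := by rw [length_of_mem_dyckFinset hq.1.1]; omega
    simp [eraseUD_insertUD hjv]
  · rintro ⟨w, i⟩ hq
    simp only [mem_coe, mem_filter] at hq
    simp [insertUD_eraseUD hq.2.1]

lemma sum_peakCount_succ (n : ℕ) :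
    ∑ w ∈ dyckFinset (n + 1), peakCount w = (2 * n + 1) * catalan n := by
  have hpeak : ∀ w ∈ dyckFinset (n + 1), peakCount w =
      Nat.count (fun i => isPeakB w i = true ∧ True) (2 * (n + 1)) := fun w hw => by
    simp [peakCount, length_filter_range_eq_count, length_of_mem_dyckFinset hw]
  rw [sum_congr rfl hpeak, sum_count_isPeakB_and]
  simp [card_dyckFinset, mul_comm]

lemma sum_spCount_succ (n : ℕ) :
    ∑ w ∈ dyckFinset (n + 1), spCount w =
      ∑ w ∈ dyckFinset n, spCount w + ∑ w ∈ dyckFinset n, peakCount w + catalan n := by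
  have hsym : ∀ w ∈ dyckFinset (n + 1), spCount w =
      Nat.count (fun i => isPeakB w i = true ∧ isSymPeakB w i = true) (2 * (n + 1)) :=
    fun w hw => by
      rw [spCount, length_filter_range_eq_count, length_of_mem_dyckFinset hw]
      exact Nat.count_congr fun i _ => ⟨fun h => ⟨(isSymPeakB_iff.mp h).1, h⟩, And.right⟩
  have hins : ∀ v ∈ dyckFinset n,
      Nat.count (fun j => isSymPeakB (insertUD v j) j = true) (2 * n + 1) =
        spCount v + peakCount v + 1 := fun v hv => by
    rw [← length_of_mem_dyckFinset hv, count_isSymPeakB_insertUD]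
    ring
  rw [sum_congr rfl hsym, sum_count_isPeakB_and, sum_congr rfl hins, sum_add_distrib,
    sum_add_distrib, sum_const, card_dyckFinset, smul_eq_mul, mul_one]

end PairCounting

section GeneratingFunctions

open PowerSeries

lemma PowerSeries.mk_eq_X_mul_mk_succ {A : Type*} [Semiring A] {f : ℕ → A} (h0 : f 0 = 0) :
    mk f = X * mk fun n => f (n + 1) := by
  ext n
  cases n <;> simp [coeff_succ_X_mul, h0]

lemma PowerSeries.eq_of_sq_eq_sq_of_constantCoeff_eq {K : Type*} [CommRing K] [IsDomain K]
    [CharZero K] {f g : K⟦X⟧} (h : f ^ 2 = g ^ 2) (hc : constantCoeff f = constantCoeff g)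
    (hg : constantCoeff g ≠ 0) : f = g := by
  refine (sq_eq_sq_iff_eq_or_eq_neg.mp h).resolve_right fun hneg => hg ?_
  rw [hneg, map_neg] at hc
  have htwice : (2 : K) * constantCoeff g = 0 := by linear_combination -hc
  exact (mul_eq_zero.mp htwice).resolve_left two_ne_zero

noncomputable def catalanSeriesRat : ℚ⟦X⟧ := PowerSeries.map (Nat.castRingHom ℚ) catalanSeries

lemma coeff_catalanSeriesRat (n : ℕ) : coeff n catalanSeriesRat = catalan n := by
  simp [catalanSeriesRat]

lemma constantCoeff_catalanSeriesRat : constantCoeff catalanSeriesRat = 1 := by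
  simpa using coeff_catalanSeriesRat 0

lemma catalanSeriesRat_eq : catalanSeriesRat = 1 + X * catalanSeriesRat ^ 2 := by
  have h := congrArg (PowerSeries.map (Nat.castRingHom ℚ)) catalanSeries_sq_mul_X_add_one
  simp only [map_add, map_mul, map_pow, map_X, map_one] at h
  rw [catalanSeriesRat]
  linear_combination -h

lemma derivative_catalanSeriesRat :
    d⁄dX ℚ catalanSeriesRat * (1 - 2 * X * catalanSeriesRat) = catalanSeriesRat ^ 2 := by
  have h := congrArg (d⁄dX ℚ) catalanSeriesRat_eq
  simp only [map_add, Derivation.map_one_eq_zero, Derivation.leibniz, Derivation.leibniz_pow,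
    derivative_X, smul_eq_mul] at h
  linear_combination h

lemma dyckFinset_zero : dyckFinset 0 = {[]} := by
  ext w
  rw [mem_dyckFinset, Finset.mem_singleton, Nat.mul_zero, List.length_eq_zero_iff]
  exact ⟨And.left, fun hw => ⟨hw, hw ▸ by decide⟩⟩

lemma mk_sum_peakCount_eq :
    mk (fun n => ((∑ w ∈ dyckFinset n, peakCount w : ℕ) : ℚ)) =
      X * (2 * X * d⁄dX ℚ catalanSeriesRat + catalanSeriesRat) := by
  rw [mk_eq_X_mul_mk_succ (by simp [dyckFinset_zero, peakCount])]
  congr 1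
  ext n
  rw [two_mul, add_mul]
  cases n
  · simp [sum_peakCount_succ, constantCoeff_catalanSeriesRat]
  · simp [sum_peakCount_succ, coeff_succ_X_mul, coeff_derivative, coeff_catalanSeriesRat]
    ring

lemma one_sub_X_mul_mk_sum_spCount :
    (1 - X) * mk (fun n => ((∑ w ∈ dyckFinset n, spCount w : ℕ) : ℚ)) =
      X * (mk (fun n => ((∑ w ∈ dyckFinset n, peakCount w : ℕ) : ℚ)) + catalanSeriesRat) := by
  have hsucc : (mk fun n => ((∑ w ∈ dyckFinset (n + 1), spCount w : ℕ) : ℚ)) =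
      mk (fun n => ((∑ w ∈ dyckFinset n, spCount w : ℕ) : ℚ)) +
        (mk (fun n => ((∑ w ∈ dyckFinset n, peakCount w : ℕ) : ℚ)) + catalanSeriesRat) := by
    ext n
    simp [sum_spCount_succ, coeff_catalanSeriesRat, add_assoc]
  have hshift := mk_eq_X_mul_mk_succ (f := fun n => ((∑ w ∈ dyckFinset n, spCount w : ℕ) : ℚ))
    (by simp [dyckFinset_zero, spCount])
  rw [hsucc] at hshift
  linear_combination hshift

end GeneratingFunctions

open PowerSeries in
/-- The generating function for the total number of symmetric
peaks over all Dyck paths of semilength `n` is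
`(5z − 1 + (1−z)√(1−4z)) / (2(1−z)√(1−4z))`, where `√(1−4z)` is the formal
power series `R` with `R² = 1 − 4z` and constant term `1`. -/
theorem total_symmetric_peaks_gf (R : PowerSeries ℚ)
    (hR : R ^ 2 = 1 - 4 * X) (hR0 : constantCoeff R = 1) :
    2 * (1 - X) * R * (mk fun n => ((∑ w ∈ dyckFinset n, spCount w : ℕ) : ℚ)) =
      5 * X - 1 + (1 - X) * R := by
  have hsqrt : R = 1 - 2 * X * catalanSeriesRat := by
    refine eq_of_sq_eq_sq_of_constantCoeff_eq ?_ ?_ ?_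
    · linear_combination hR + 4 * X * catalanSeriesRat_eq
    · simp [hR0]
    · simp
  rw [hsqrt]
  linear_combination (2 * (1 - 2 * X * catalanSeriesRat)) * one_sub_X_mul_mk_sum_spCount +
    (2 * X * (1 - 2 * X * catalanSeriesRat)) * mk_sum_peakCount_eq +
    4 * X ^ 3 * derivative_catalanSeriesRat + 4 * X * catalanSeriesRat_eq
end

section
/- For every n ≥ 0, the sum over all Dyck paths of semilength n of the total weight of their symmetric peaks equals the sum over all k from 0 to n of the total number of symmetric peaks over all Dyck paths of semilength k. -/
namespace SPAux

open List

/-! ### generic list helpers -/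

lemma takeWhile_congr {α : Type*} {p q : α → Bool} :
    ∀ (l : List α), (∀ a ∈ l, p a = q a) → l.takeWhile p = l.takeWhile q := by
  intro l
  induction l with
  | nil => intro _; rfl
  | cons a l ih =>
    intro h
    have ha := h a (by simp)
    by_cases hp : p a = true
    · rw [List.takeWhile_cons_of_pos hp, List.takeWhile_cons_of_pos (ha ▸ hp),
        ih (fun b hb => h b (by simp [hb]))]
    · have hp' : p a = false := by simpa using hp
      rw [List.takeWhile_cons_of_neg (by simp [hp']),
        List.takeWhile_cons_of_neg (by simp [ha ▸ hp'])]

lemma takeWhile_range_succ (q : ℕ → Bool) (n : ℕ) (h0 : q 0 = true) :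
    ((List.range (n+1)).takeWhile q).length
      = ((List.range n).takeWhile (fun k => q (k+1))).length + 1 := by
  rw [List.range_succ_eq_map, List.takeWhile_cons_of_pos h0, List.length_cons,
    List.takeWhile_map, List.length_map]
  rfl

lemma takeWhile_range_pos (q : ℕ → Bool) (n : ℕ) (h0 : q 0 = true) (hn : 1 ≤ n) :
    1 ≤ ((List.range n).takeWhile q).length := by
  obtain ⟨m, rfl⟩ : ∃ m, n = m + 1 := ⟨n - 1, by omega⟩
  rw [takeWhile_range_succ q m h0]; omega

lemma takeWhile_range_q0 {q : ℕ → Bool} {n : ℕ}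
    (h : 1 ≤ ((List.range n).takeWhile q).length) : q 0 = true ∧ 1 ≤ n := by
  rcases n with _ | m
  · simp at h
  · refine ⟨?_, by omega⟩
    by_contra hq
    have hq' : q 0 = false := by simpa using hq
    rw [List.range_succ_eq_map, List.takeWhile_cons_of_neg (by simp [hq'])] at h
    simp at h

lemma takeWhile_range_le (q : ℕ → Bool) (n : ℕ) :
    ((List.range n).takeWhile q).length ≤ n := by
  have := (List.takeWhile_prefix q (l := List.range n)).length_le
  simpa using this

end SPAux
namespace SPAux

/-! ### run lengths under insertion of `ud` at position `x.length` -/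

lemma getD_W_left (x y : List Bool) (d : Bool) {j : ℕ} (hj : j < x.length) :
    (x ++ true :: false :: y).getD j d = (x ++ y).getD j d := by
  rw [List.getD_append _ _ _ _ hj, List.getD_append _ _ _ _ hj]

lemma getD_W_u (x y : List Bool) :
    (x ++ true :: false :: y).getD x.length false = true := by
  rw [List.getD_append_right _ _ _ _ le_rfl]; simp

lemma getD_W_d (x y : List Bool) :
    (x ++ true :: false :: y).getD (x.length + 1) true = false := by
  rw [List.getD_append_right _ _ _ _ (by omega)]
  simp [Nat.add_sub_cancel_left]

lemma getD_W_right (x y : List Bool) (d : Bool) (k : ℕ) :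
    (x ++ true :: false :: y).getD (x.length + 2 + k) d = y.getD k d := by
  rw [List.getD_append_right _ _ _ _ (by omega)]
  have : x.length + 2 + k - x.length = k + 2 := by omega
  rw [this]; rfl

lemma getD_w_right (x y : List Bool) (d : Bool) (k : ℕ) :
    (x ++ y).getD (x.length + k) d = y.getD k d := by
  rw [List.getD_append_right _ _ _ _ (by omega)]
  simp

lemma upRunL_insert (x y : List Bool) (hx : x ≠ []) :
    upRunL (x ++ true :: false :: y) x.length = upRunL (x ++ y) (x.length - 1) + 1 := by
  have hL : 1 ≤ x.length := List.length_pos_iff.mpr hx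
  unfold upRunL
  have h1 : x.length - 1 + 1 = x.length := by omega
  rw [h1]
  rw [takeWhile_range_succ _ _ (by simpa using getD_W_u x y)]
  congr 1
  apply congrArg
  apply takeWhile_congr
  intro k hk
  have hk' : k < x.length := by simpa using hk
  have e : x.length - (k + 1) = x.length - 1 - k := by omega
  rw [e]
  exact getD_W_left x y false (by omega)

lemma downRunR_insert (x y : List Bool) :
    downRunR (x ++ true :: false :: y) (x.length + 1) = downRunR (x ++ y) x.length + 1 := by
  unfold downRunR
  have h1 : (x ++ true :: false :: y).length - (x.length + 1) = y.length + 1 := by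
    simp only [List.length_append, List.length_cons]; omega
  have h2 : (x ++ y).length - x.length = y.length := by
    simp only [List.length_append]; omega
  rw [h1, h2]
  rw [takeWhile_range_succ _ _ (by simp only [Nat.add_zero, getD_W_d]; rfl)]
  congr 1
  apply congrArg
  apply takeWhile_congr
  intro k hk
  have e1 : x.length + 1 + (k + 1) = x.length + 2 + k := by omega
  rw [e1, getD_W_right, getD_w_right]

/-- weight of a symmetric peak is at least 1 -/
lemma peak_runs_pos {w : List Bool} {i : ℕ} (h : isPeakB w i = true) :
    1 ≤ upRunL w i ∧ 1 ≤ downRunR w (i+1) := by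
  have hu : w.getD i false = true := by
    unfold isPeakB at h; exact (Bool.and_eq_true _ _ ▸ h).1
  have hd : w.getD (i+1) true = false := by
    unfold isPeakB at h
    have := (Bool.and_eq_true _ _ ▸ h).2
    simpa using this
  have hlen : i + 1 < w.length := by
    by_contra hc
    rw [List.getD_eq_default _ _ (by omega)] at hd
    exact absurd hd (by simp)
  constructor
  · exact takeWhile_range_pos _ _ (by simpa using hu) (by omega)
  · exact takeWhile_range_pos _ _ (by simp only [Nat.add_zero, hd]; rfl) (by omega)

end SPAux
namespace SPAux

/-! ### Dyck condition under insertion -/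

def cnt (l : List Bool) : ℤ := (l.count true : ℤ) - (l.count false : ℤ)

lemma hgt_eq_cnt (w : List Bool) (j : ℕ) : hgt w j = cnt (w.take j) := rfl

lemma cnt_append (a b : List Bool) : cnt (a ++ b) = cnt a + cnt b := by
  unfold cnt
  simp [List.count_append]
  ring

lemma hgt_append_left (x z : List Bool) {j : ℕ} (hj : j ≤ x.length) :
    hgt (x ++ z) j = hgt x j := by
  rw [hgt_eq_cnt, hgt_eq_cnt, List.take_append,
    Nat.sub_eq_zero_of_le hj]
  simp

lemma hgt_append_right (x z : List Bool) (m : ℕ) :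
    hgt (x ++ z) (x.length + m) = cnt x + hgt z m := by
  rw [hgt_eq_cnt, hgt_eq_cnt, List.take_append, cnt_append,
    List.take_of_length_le (by omega), Nat.add_sub_cancel_left]

lemma cnt_cons_u (l : List Bool) : cnt (true :: l) = cnt l + 1 := by
  unfold cnt; simp; ring

lemma cnt_cons_d (l : List Bool) : cnt (false :: l) = cnt l - 1 := by
  unfold cnt; simp; ring

lemma dyck_insert_iff (x y : List Bool) :
    IsDyckWord (x ++ true :: false :: y) ↔ IsDyckWord (x ++ y) := by
  have hWw : ∀ j, hgt (x ++ true :: false :: y) (x.length + 2 + j)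
      = hgt (x ++ y) (x.length + j) := by
    intro j
    rw [show x.length + 2 + j = x.length + (2 + j) from by omega,
      hgt_append_right, hgt_append_right]
    congr 1
    rw [hgt_eq_cnt, hgt_eq_cnt]
    simp only [show 2 + j = j + 1 + 1 from by omega, List.take_succ_cons,
      cnt_cons_u, cnt_cons_d]
    ring
  have hmid : hgt (x ++ true :: false :: y) (x.length + 1) = hgt (x ++ y) x.length + 1 := by
    rw [show x.length + 1 = x.length + 1 from rfl, hgt_append_right]
    rw [show x.length = x.length + 0 from by omega, hgt_append_right]
    show cnt x + cnt [true] = cnt x + cnt [] + 1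
    unfold cnt; simp
  have hcount : ((x ++ true :: false :: y).count true = (x ++ true :: false :: y).count false)
      ↔ ((x ++ y).count true = (x ++ y).count false) := by
    simp [List.count_append, List.count_cons]
    omega
  constructor
  · rintro ⟨hc, hh⟩
    refine ⟨hcount.mp hc, fun j => ?_⟩
    rcases le_or_gt j x.length with h | h
    · rw [hgt_append_left x y h, ← hgt_append_left x (true :: false :: y) h]
      exact hh j
    · have : j = x.length + (j - x.length) := by omega
      rw [this, ← hWw]
      exact hh _
  · rintro ⟨hc, hh⟩
    refine ⟨hcount.mpr hc, fun j => ?_⟩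
    rcases le_or_gt j x.length with h | h
    · rw [hgt_append_left x (true :: false :: y) h, ← hgt_append_left x y h]
      exact hh j
    · rcases eq_or_lt_of_le (Nat.succ_le_of_lt h) with h1 | h1
      · rw [← h1, hmid]
        have := hh x.length
        omega
      · have : j = x.length + 2 + (j - x.length - 2) := by omega
        rw [this, hWw]
        exact hh _

lemma mem_boolLists {w : List Bool} {m : ℕ} : w ∈ boolLists m ↔ w.length = m := by
  unfold boolLists
  simp only [Finset.mem_image, Finset.mem_univ, true_and]
  constructor
  · rintro ⟨f, rfl⟩; simp
  · rintro rfl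
    exact ⟨w.get, List.ofFn_get w⟩

lemma mem_dyckFinset {w : List Bool} {n : ℕ} :
    w ∈ dyckFinset n ↔ w.length = 2 * n ∧ IsDyckWord w := by
  unfold dyckFinset
  rw [Finset.mem_filter, mem_boolLists]

end SPAux
namespace SPAux

def symPairs (n : ℕ) : Finset (List Bool × ℕ) :=
  (dyckFinset n ×ˢ Finset.range (2*n)).filter (fun p => isSymPeakB p.1 p.2 = true)

lemma list_filter_map_sum (m : ℕ) (p : ℕ → Bool) (f : ℕ → ℕ) :
    (((List.range m).filter p).map f).sum
      = ∑ i ∈ (Finset.range m).filter (fun i => p i = true), f i := by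
  induction m with
  | zero => simp
  | succ m ih =>
    rw [List.range_succ, List.filter_append, List.map_append, List.sum_append, ih,
      Finset.range_add_one, Finset.filter_insert]
    by_cases hp : p m = true
    · rw [if_pos hp, Finset.sum_insert (by simp)]
      simp [hp, Nat.add_comm]
    · rw [if_neg hp]
      simp [hp]

lemma sum_spWeight (n : ℕ) :
    ∑ w ∈ dyckFinset n, spWeight w = ∑ p ∈ symPairs n, peakWeight p.1 p.2 := by
  unfold symPairs
  rw [Finset.sum_filter, Finset.sum_product]
  apply Finset.sum_congr rfl
  intro w hw
  have hlen : w.length = 2*n := (mem_dyckFinset.mp hw).1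
  rw [← Finset.sum_filter]
  unfold spWeight
  rw [list_filter_map_sum, hlen]

lemma sum_spCount (n : ℕ) :
    ∑ w ∈ dyckFinset n, spCount w = (symPairs n).card := by
  unfold symPairs
  rw [Finset.card_eq_sum_ones, Finset.sum_filter, Finset.sum_product]
  apply Finset.sum_congr rfl
  intro w hw
  have hlen : w.length = 2*n := (mem_dyckFinset.mp hw).1
  rw [← Finset.sum_filter]
  unfold spCount
  rw [← list_filter_map_sum _ _ (fun _ => 1), hlen]
  have h1 : ∀ l : List ℕ, (l.map (fun _ => (1:ℕ))).sum = l.length := by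
    intro l
    induction l with
    | nil => rfl
    | cons a l ih => simp [ih, Nat.add_comm]
  rw [h1]

lemma mem_symPairs {n : ℕ} {p : List Bool × ℕ} :
    p ∈ symPairs n ↔ (p.1 ∈ dyckFinset n ∧ p.2 < 2*n) ∧ isSymPeakB p.1 p.2 = true := by
  unfold symPairs
  rw [Finset.mem_filter, Finset.mem_product, Finset.mem_range]

end SPAux
namespace SPAux

lemma isPeakB_iff {w : List Bool} {i : ℕ} :
    isPeakB w i = true ↔ w.getD i false = true ∧ w.getD (i+1) true = false := by
  unfold isPeakB; simp

lemma isSymPeakB_iff {w : List Bool} {i : ℕ} :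
    isSymPeakB w i = true ↔ isPeakB w i = true ∧ upRunL w i = downRunR w (i+1) := by
  unfold isSymPeakB
  rw [Bool.and_eq_true, beq_iff_eq]

lemma lt_length_of_getD_u {w : List Bool} {i : ℕ} (h : w.getD i false = true) :
    i < w.length := by
  by_contra hc
  rw [List.getD_eq_default _ _ (by omega)] at h
  exact absurd h (by simp)

lemma lt_length_of_getD_d {w : List Bool} {i : ℕ} (h : w.getD i true = false) :
    i < w.length := by
  by_contra hc
  rw [List.getD_eq_default _ _ (by omega)] at h
  exact absurd h (by simp)

def insP (p : List Bool × ℕ) : List Bool × ℕ :=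
  (p.1.take (p.2+1) ++ true :: false :: p.1.drop (p.2+1), p.2+1)

def delP (q : List Bool × ℕ) : List Bool × ℕ :=
  (q.1.take q.2 ++ q.1.drop (q.2+2), q.2 - 1)

lemma ins_spec {n : ℕ} {p : List Bool × ℕ} (hp : p ∈ symPairs n) :
    insP p ∈ symPairs (n+1)
      ∧ peakWeight (insP p).1 (insP p).2 = peakWeight p.1 p.2 + 1
      ∧ delP (insP p) = p := by
  obtain ⟨w, i⟩ := p
  obtain ⟨⟨hd, hr⟩, hs⟩ := mem_symPairs.mp hp
  obtain ⟨hlen, hdyck⟩ := mem_dyckFinset.mp hd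
  dsimp only at hs hd hr hlen hdyck
  obtain ⟨hpk, hruns⟩ := isSymPeakB_iff.mp hs
  obtain ⟨hu, hdn⟩ := isPeakB_iff.mp hpk
  have hi : i < w.length := lt_length_of_getD_u hu
  have hxy : w.take (i+1) ++ w.drop (i+1) = w := List.take_append_drop _ _
  set x := w.take (i+1) with hxdef
  set y := w.drop (i+1) with hydef
  have hxlen : x.length = i + 1 := by
    rw [hxdef, List.length_take]; omega
  have hxne : x ≠ [] := by
    intro hc; rw [hc] at hxlen; simp at hxlen
  have hWdef : insP (w, i) = (x ++ true :: false :: y, i + 1) := rfl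
  have hup : upRunL (x ++ true :: false :: y) (i+1) = upRunL w i + 1 := by
    rw [← hxlen, upRunL_insert x y hxne, hxlen]
    simp [hxy]
  have hdown : downRunR (x ++ true :: false :: y) (i+1+1) = downRunR w (i+1) + 1 := by
    rw [show i+1+1 = i+1+1 from rfl, ← hxlen, downRunR_insert x y, hxlen, hxy]
  have hWlen : (x ++ true :: false :: y).length = 2 * (n+1) := by
    have : (x ++ y).length = 2 * n := by rw [hxy]; exact hlen
    simp only [List.length_append, List.length_cons] at this ⊢
    omega
  have hpk' : isPeakB (x ++ true :: false :: y) (i+1) = true := by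
    rw [isPeakB_iff]
    constructor
    · rw [← hxlen]; exact getD_W_u x y
    · rw [show i+1+1 = x.length + 1 from by omega]; exact getD_W_d x y
  refine ⟨?_, ?_, ?_⟩
  · rw [hWdef, mem_symPairs]
    refine ⟨⟨mem_dyckFinset.mpr ⟨hWlen, ?_⟩, by omega⟩, ?_⟩
    · rw [dyck_insert_iff, hxy]; exact hdyck
    · rw [isSymPeakB_iff]
      exact ⟨hpk', by rw [hup, hdown, hruns]⟩
  · rw [hWdef]
    show peakWeight (x ++ true :: false :: y) (i+1) = peakWeight w i + 1
    unfold peakWeight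
    rw [hup, hdown]
    omega
  · rw [hWdef]
    show (List.take (i+1) (x ++ true :: false :: y)
        ++ List.drop (i+1+2) (x ++ true :: false :: y), i+1-1) = (w, i)
    rw [show i+1 = x.length from hxlen.symm]
    rw [List.take_left, List.drop_length_add_append 2]
    have e : x.length - 1 = i := by omega
    simp only [List.drop_succ_cons, List.drop_zero]
    rw [hxy, e]

lemma del_spec {n : ℕ} {q : List Bool × ℕ} (hq : q ∈ symPairs (n+1))
    (h2 : 2 ≤ peakWeight q.1 q.2) :
    delP q ∈ symPairs n ∧ insP (delP q) = q := by
  obtain ⟨W, I⟩ := q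
  obtain ⟨⟨hd, hr⟩, hs⟩ := mem_symPairs.mp hq
  obtain ⟨hlen, hdyck⟩ := mem_dyckFinset.mp hd
  dsimp only at hs hd hr hlen hdyck h2
  obtain ⟨hpk, hruns⟩ := isSymPeakB_iff.mp hs
  obtain ⟨hu, hdn⟩ := isPeakB_iff.mp hpk
  have hI : I < W.length := lt_length_of_getD_u hu
  have hI1 : I + 1 < W.length := lt_length_of_getD_d hdn
  have hu2 : 2 ≤ upRunL W I := le_trans h2 (Nat.min_le_left _ _)
  have hd2 : 2 ≤ downRunR W (I+1) := le_trans h2 (Nat.min_le_right _ _)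
  -- extract W.getD (I-1) = true and 1 ≤ I
  have hprev : W.getD (I-1) false = true ∧ 1 ≤ I := by
    unfold upRunL at hu2
    rw [takeWhile_range_succ _ _ (by simpa using hu)] at hu2
    have := takeWhile_range_q0 (q := fun k => W.getD (I - (k+1)) false) (n := I) (by omega)
    simpa using this
  obtain ⟨hprev1, hIpos⟩ := hprev
  -- extract W.getD (I+2) = false
  have hnext : W.getD (I+2) true = false := by
    unfold downRunR at hd2
    rw [show W.length - (I+1) = (W.length - (I+1) - 1) + 1 from by omega,
      takeWhile_range_succ _ _ (by simp only [Nat.add_zero, hdn]; rfl)] at hd2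
    have h' := (takeWhile_range_q0
      (q := fun k => !(W.getD (I+1+(k+1)) true)) (n := W.length - (I+1) - 1) (by omega)).1
    have h'' : W.getD (I+1+1) true = false := by simpa using h'
    have e : I + 1 + 1 = I + 2 := by omega
    rw [e] at h''
    exact h''
  have hI2 : I + 2 < W.length := lt_length_of_getD_d hnext
  -- decompose W
  obtain ⟨x, y, hW, hxlen⟩ :
      ∃ x y : List Bool, W = x ++ true :: false :: y ∧ x.length = I := by
    refine ⟨W.take I, W.drop (I+2), ?_, by rw [List.length_take]; omega⟩
    conv_lhs => rw [← List.take_append_drop I W]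
    congr 1
    rw [List.drop_eq_getElem_cons hI, List.drop_eq_getElem_cons hI1]
    congr 1
    · rw [← List.getD_eq_getElem W false hI]; exact hu
    · congr 1
      rw [← List.getD_eq_getElem W true hI1]; exact hdn
  subst hW
  subst hxlen
  have hxne : x ≠ [] := by
    intro hc; rw [hc] at hIpos; simp at hIpos
  have hdel : delP (x ++ true :: false :: y, x.length) = (x ++ y, x.length - 1) := by
    unfold delP
    simp only
    rw [List.take_left, List.drop_length_add_append 2]
    rfl
  have hup := upRunL_insert x y hxne
  have hdown := downRunR_insert x y
  have hw2 : x.length + y.length = 2 * n := by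
    simp only [List.length_append, List.length_cons] at hlen
    omega
  have hwlen : (x ++ y).length = 2 * n := by
    simp only [List.length_append]
    omega
  have hpkw : isPeakB (x ++ y) (x.length - 1) = true := by
    rw [isPeakB_iff]
    constructor
    · rw [← getD_W_left x y false (by omega)]; exact hprev1
    · rw [show x.length - 1 + 1 = x.length from by omega,
        show x.length = x.length + 0 from by omega, getD_w_right]
      rw [← getD_W_right x y true 0]
      simpa using hnext
  rw [hdel]
  constructor
  · rw [mem_symPairs]
    refine ⟨⟨mem_dyckFinset.mpr ⟨hwlen, (dyck_insert_iff x y).mp hdyck⟩, by omega⟩, ?_⟩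
    rw [isSymPeakB_iff]
    refine ⟨hpkw, ?_⟩
    dsimp only
    have h1 : upRunL (x ++ true :: false :: y) x.length
        = downRunR (x ++ true :: false :: y) (x.length + 1) := hruns
    rw [hup, hdown] at h1
    have e : x.length - 1 + 1 = x.length := by omega
    rw [e]
    omega
  · unfold insP
    simp only
    rw [show x.length - 1 + 1 = x.length from by omega, List.take_left, List.drop_left]

end SPAux
namespace SPAux

lemma wt_pos {n : ℕ} {p : List Bool × ℕ} (hp : p ∈ symPairs n) :
    1 ≤ peakWeight p.1 p.2 := by
  obtain ⟨_, hs⟩ := mem_symPairs.mp hp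
  obtain ⟨h1, h2⟩ := peak_runs_pos (isSymPeakB_iff.mp hs).1
  exact le_min h1 h2

lemma step (n : ℕ) :
    ∑ p ∈ symPairs (n+1), peakWeight p.1 p.2
      = (symPairs (n+1)).card + ∑ p ∈ symPairs n, peakWeight p.1 p.2 := by
  have key : ∑ p ∈ symPairs n, peakWeight p.1 p.2
      = ∑ p ∈ (symPairs (n+1)).filter (fun q => 2 ≤ peakWeight q.1 q.2),
          (peakWeight p.1 p.2 - 1) := by
    apply Finset.sum_nbij' insP delP
    · intro p hp
      rw [Finset.mem_filter]
      exact ⟨(ins_spec hp).1, by rw [(ins_spec hp).2.1]; have := wt_pos hp; omega⟩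
    · intro q hq
      rw [Finset.mem_filter] at hq
      exact (del_spec hq.1 hq.2).1
    · intro p hp
      exact (ins_spec hp).2.2
    · intro q hq
      rw [Finset.mem_filter] at hq
      exact (del_spec hq.1 hq.2).2
    · intro p hp
      rw [(ins_spec hp).2.1]
      omega
  have split : ∑ p ∈ symPairs (n+1), peakWeight p.1 p.2
      = ∑ p ∈ symPairs (n+1), ((peakWeight p.1 p.2 - 1) + 1) := by
    apply Finset.sum_congr rfl
    intro p hp
    have := wt_pos hp
    omega
  rw [split, Finset.sum_add_distrib, key]
  have hne : ∀ p ∈ symPairs (n+1), peakWeight p.1 p.2 - 1 ≠ 0 →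
      2 ≤ peakWeight p.1 p.2 := by
    intro p _ h
    omega
  rw [Finset.sum_filter_of_ne hne]
  rw [Finset.card_eq_sum_ones]
  omega

lemma symPairs_zero : symPairs 0 = ∅ := by
  unfold symPairs
  have : (2 : ℕ) * 0 = 0 := rfl
  rw [this]
  simp

end SPAux

/-- For every `n`, the sum over all Dyck paths of semilength `n`
of the total weight of their symmetric peaks equals the sum over `0 ≤ k ≤ n` of
the total number of symmetric peaks over all Dyck paths of semilength `k`. -/
theorem total_spWeight_eq_partial_sums_sp (n : ℕ) :
    ∑ w ∈ dyckFinset n, spWeight w =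
      ∑ k ∈ Finset.range (n + 1), ∑ w ∈ dyckFinset k, spCount w := by
  induction n with
  | zero =>
    rw [SPAux.sum_spWeight 0, SPAux.symPairs_zero]
    simp [Finset.sum_range_one, SPAux.sum_spCount, SPAux.symPairs_zero]
  | succ n ih =>
    rw [Finset.sum_range_succ, ← ih, SPAux.sum_spWeight n, SPAux.sum_spWeight (n+1),
      SPAux.sum_spCount (n+1), SPAux.step n]
    omega
end

section
/- There exists a bijection between the set of pairs (D, P) where D is a Dyck path of semilength at most n and P is a distinguished symmetric peak of D, and the set of triples (D', P', i) where D' is a Dyck path of semilength exactly n, P' is a distinguished symmetric peak of D', and 1 ≤ i ≤ weight of P'. The map inserts a pyramid u^{n−k} d^{n−k} at the top of the distinguished peak of a path of semilength k. -/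
/-!
A symmetric peak of weight `a` at position `p` of `w` is the same thing as a factorisation
`w = A uᵃ dᵃ B` with `|A| + a = p + 1`, `0 < a`, where `A` does not end in `u` and `B` does not
start with `d`. Inserting `uᵐ dᵐ` at the top of the peak gives the symmetric peak `A uᵃ⁺ᵐ dᵃ⁺ᵐ B`
of weight `a + m`, and deleting `uᵐ dᵐ` for `m < a` undoes this; both preserve the Dyck property,
because inserting or deleting a Dyck factor does. So a path of semilength `k ≤ n` with a marked
symmetric peak of weight `a` corresponds to the path grown by `n - k`, its peak, and `i = a`.
-/

namespace List

variable {α : Type*}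

theorem reverse_take_succ_eq_map_range {w : List α} {i : ℕ} (d : α)
    (hi : i < w.length) :
    (w.take (i + 1)).reverse = (range (i + 1)).map (fun k => w.getD (i - k) d) := by
  apply ext_getElem
  · simp only [length_reverse, length_take, length_map, length_range]
    omega
  · intro k h₁ h₂
    simp only [length_map, length_range] at h₂
    simp only [getElem_reverse, getElem_take, getElem_map, getElem_range,
      getD_eq_getElem?_getD, getElem?_eq_getElem (show i - k < w.length by omega),
      Option.getD_some, length_take]
    congr 1
    omega

theorem drop_eq_map_range (w : List α) (i : ℕ) (d : α) :
    w.drop i = (range (w.length - i)).map (fun k => w.getD (i + k) d) := by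
  apply ext_getElem
  · simp
  · intro k h₁ _
    simp only [length_drop] at h₁
    simp [getD_eq_getElem?_getD, getElem?_eq_getElem (show i + k < w.length by omega)]

theorem length_takeWhile_replicate_append {q : α → Bool} {b : α} (hb : q b = true)
    (a : ℕ) {X : List α} (hX : ∀ x ∈ X.head?, q x = false) :
    ((replicate a b ++ X).takeWhile q).length = a := by
  rw [takeWhile_append_of_pos (by simp [hb])]
  cases X <;> simp_all

theorem takeWhile_eq_replicate {q : α → Bool} {b : α}
    (hq : ∀ x, q x = true → x = b) (l : List α) :
    l.takeWhile q = replicate (l.takeWhile q).length b :=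
  eq_replicate_iff.2 ⟨rfl, fun x hx => hq x (mem_takeWhile_imp hx)⟩

end List

theorem upRunL_eq_length_takeWhile {w : List Bool} {i : ℕ} (hi : i < w.length) :
    upRunL w i = ((w.take (i + 1)).reverse.takeWhile id).length := by
  rw [List.reverse_take_succ_eq_map_range false hi, List.takeWhile_map, List.length_map]
  rfl

theorem downRunR_eq_length_takeWhile (w : List Bool) (i : ℕ) :
    downRunR w i = ((w.drop i).takeWhile (!·)).length := by
  rw [List.drop_eq_map_range w i true, List.takeWhile_map, List.length_map]
  rfl

theorem upRunL_pos {w : List Bool} {i : ℕ} (h : w.getD i false = true) : 0 < upRunL w i := by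
  rw [upRunL, List.range_succ_eq_map, List.takeWhile_cons, if_pos (by simpa using h)]
  simp

def pyramid (k : ℕ) : List Bool := List.replicate k true ++ List.replicate k false

def IsSymMountain (w : List Bool) (p a : ℕ) : Prop :=
  ∃ A B : List Bool, w = A ++ pyramid a ++ B ∧ A.length + a = p + 1 ∧ 0 < a ∧
    A.getLast? ≠ some true ∧ B.head? ≠ some false

namespace IsSymMountain

variable {w : List Bool} {p a : ℕ}

theorem pos (h : IsSymMountain w p a) : 0 < a := by
  obtain ⟨-, -, -, -, ha, -⟩ := h
  exact ha

theorem le_succ (h : IsSymMountain w p a) : a ≤ p + 1 := by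
  obtain ⟨A, -, -, hp, -⟩ := h
  omega

theorem lt_length (h : IsSymMountain w p a) : p < w.length := by
  obtain ⟨A, B, rfl, hp, -⟩ := h
  simp only [pyramid, List.length_append, List.length_replicate]
  omega

theorem upRunL_eq (h : IsSymMountain w p a) : upRunL w p = a := by
  have hlen := h.lt_length
  obtain ⟨A, B, rfl, hp, -, hA, -⟩ := h
  have htake : (A ++ pyramid a ++ B).take (p + 1) = A ++ List.replicate a true := by
    simp [pyramid, List.take_append, ← hp]
  rw [upRunL_eq_length_takeWhile hlen, htake, List.reverse_append,
    List.reverse_replicate]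
  exact List.length_takeWhile_replicate_append rfl a (by simpa using hA)

theorem downRunR_eq (h : IsSymMountain w p a) : downRunR w (p + 1) = a := by
  obtain ⟨A, B, rfl, hp, -, -, hB⟩ := h
  have hdrop : (A ++ pyramid a ++ B).drop (p + 1) = List.replicate a false ++ B := by
    simp [pyramid, List.drop_append, ← hp]
  rw [downRunR_eq_length_takeWhile, hdrop]
  exact List.length_takeWhile_replicate_append rfl a (by simpa using hB)

theorem isSymPeakB (h : IsSymMountain w p a) : isSymPeakB w p = true := by
  have hu := h.upRunL_eq
  have hd := h.downRunR_eq
  obtain ⟨A, B, rfl, hp, ha, -, -⟩ := h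
  have hup : (A ++ pyramid a ++ B).getD p false = true := by
    rw [show p = A.length + (a - 1) by omega]
    simp [pyramid, List.getD_eq_getElem?_getD, List.getElem?_append_right,
      List.getElem?_append_left (show a - 1 < (List.replicate a true).length by
        rw [List.length_replicate]; omega),
      show a - 1 < a by omega]
  have hdown : (A ++ pyramid a ++ B).getD (p + 1) true = false := by
    rw [show p + 1 = A.length + a + 0 by omega]
    simp [pyramid, List.getD_eq_getElem?_getD, ha]
  simp only [isSymPeakB, isPeakB, hu, hd, hup, hdown]
  simp

theorem peakWeight_eq (h : IsSymMountain w p a) : peakWeight w p = a := by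
  simp [peakWeight, h.upRunL_eq, h.downRunR_eq]

end IsSymMountain

theorem isSymMountain_of_isSymPeakB {w : List Bool} {p : ℕ} (h : isSymPeakB w p = true) :
    IsSymMountain w p (peakWeight w p) := by
  simp only [isSymPeakB, isPeakB, Bool.and_eq_true, Bool.not_eq_true', beq_iff_eq] at h
  obtain ⟨⟨hup, -⟩, hsym⟩ := h
  have hp : p < w.length := by
    by_contra hp
    rw [List.getD_eq_default _ _ (by omega)] at hup
    exact Bool.false_ne_true hup
  have hweight : peakWeight w p = upRunL w p := by simp [peakWeight, hsym]
  set L := (w.take (p + 1)).reverse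
  set R := w.drop (p + 1)
  have hL : L = List.replicate (upRunL w p) true ++ L.dropWhile id := by
    rw [upRunL_eq_length_takeWhile hp, ← List.takeWhile_eq_replicate (by simp),
      List.takeWhile_append_dropWhile]
  have hR : R = List.replicate (upRunL w p) false ++ R.dropWhile (!·) := by
    rw [hsym, downRunR_eq_length_takeWhile, ← List.takeWhile_eq_replicate (by simp),
      List.takeWhile_append_dropWhile]
  have hw : w = L.reverse ++ R := by simp [L, R]
  have hLlen : L.length = p + 1 := by
    simp only [L, List.length_reverse, List.length_take]; omega
  clear_value L R
  refine ⟨(L.dropWhile id).reverse, R.dropWhile (!·), ?_, ?_, hweight ▸ upRunL_pos hup, ?_, ?_⟩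
  · conv_lhs => rw [hw, hL, hR]
    simp [hweight, pyramid]
  · have hlen := congrArg List.length hL
    simp only [List.length_append, List.length_replicate] at hlen
    simp only [List.length_reverse, hweight]
    omega
  · rw [List.getLast?_reverse]
    have := List.head?_dropWhile_not id L
    revert this
    cases (L.dropWhile id).head? <;> simp
  · have := List.head?_dropWhile_not (!·) R
    revert this
    cases (R.dropWhile (!·)).head? <;> simp

theorem hgt_append (u v : List Bool) (j : ℕ) :
    hgt (u ++ v) j = hgt u j + hgt v (j - u.length) := by
  simp only [hgt, List.take_append, List.count_append]
  push_cast
  ring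

theorem hgt_zero (u : List Bool) : hgt u 0 = 0 := by
  simp [hgt]

theorem hgt_of_length_le {u : List Bool} {j : ℕ} (h : u.length ≤ j) :
    hgt u j = hgt u u.length := by
  simp only [hgt, List.take_of_length_le h, List.take_length]

theorem IsDyckWord.hgt_length {u : List Bool} (h : IsDyckWord u) : hgt u u.length = 0 := by
  simp [hgt, h.1]

theorem IsDyckWord.length_eq {w : List Bool} (h : IsDyckWord w) :
    w.length = 2 * w.count true := by
  rw [← List.count_true_add_count_false, ← h.1, two_mul]

theorem isDyckWord_append_append_iff {A P B : List Bool} (hP : IsDyckWord P) :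
    IsDyckWord (A ++ P ++ B) ↔ IsDyckWord (A ++ B) := by
  have hAPB : ∀ j, hgt (A ++ P ++ B) j =
      hgt A j + hgt P (j - A.length) + hgt B (j - A.length - P.length) := by
    intro j
    rw [List.append_assoc, hgt_append, hgt_append, add_assoc, Nat.sub_sub]
  have hAB : ∀ j, hgt (A ++ B) j = hgt A j + hgt B (j - A.length) := hgt_append A B
  have hP0 := hP.hgt_length
  have hcount : (A ++ P ++ B).count true = (A ++ P ++ B).count false ↔
      (A ++ B).count true = (A ++ B).count false := by
    simp only [List.count_append]
    have := hP.1
    omega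
  refine and_congr hcount ⟨fun h i => ?_, fun h j => ?_⟩
  · rcases le_or_gt i A.length with hi | hi
    · have := h i
      rw [hAPB, Nat.sub_eq_zero_of_le hi, Nat.zero_sub, hgt_zero, hgt_zero] at this
      rw [hAB, Nat.sub_eq_zero_of_le hi, hgt_zero]
      linarith
    · have := h (i + P.length)
      rw [hAPB, hgt_of_length_le (by omega : A.length ≤ i + P.length),
        hgt_of_length_le (by omega : P.length ≤ i + P.length - A.length), hP0,
        show i + P.length - A.length - P.length = i - A.length by omega] at this
      rw [hAB, hgt_of_length_le hi.le]
      linarith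
  · rw [hAPB]
    rcases le_or_gt j A.length with hj | hj
    · have := h j
      rw [hAB, Nat.sub_eq_zero_of_le hj, hgt_zero] at this
      rw [Nat.sub_eq_zero_of_le hj, Nat.zero_sub, hgt_zero, hgt_zero]
      linarith
    · rcases le_or_gt j (A.length + P.length) with hj' | hj'
      · have := h A.length
        rw [hAB, Nat.sub_self, hgt_zero] at this
        rw [hgt_of_length_le hj.le, Nat.sub_eq_zero_of_le (by omega : j - A.length ≤ P.length),
          hgt_zero]
        linarith [hP.2 (j - A.length)]
      · have := h (j - P.length)
        rw [hAB, hgt_of_length_le (by omega : A.length ≤ j - P.length),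
          show j - P.length - A.length = j - A.length - P.length by omega] at this
        rw [hgt_of_length_le hj.le, hgt_of_length_le (by omega : P.length ≤ j - A.length), hP0]
        linarith

theorem isDyckWord_pyramid (k : ℕ) : IsDyckWord (pyramid k) := by
  induction k with
  | zero => decide
  | succ k ih =>
    have : pyramid (k + 1) = [true] ++ pyramid k ++ [false] := by
      simp only [pyramid, List.replicate_succ, List.cons_append, List.append_assoc]
      rw [← List.replicate_succ', List.replicate_succ]
      rfl
    rw [this, isDyckWord_append_append_iff ih]
    decide

theorem count_pyramid (b : Bool) (k : ℕ) : (pyramid k).count b = k := by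
  cases b <;> simp [pyramid, List.count_replicate]

def insertPyramid (w : List Bool) (p m : ℕ) : List Bool :=
  w.take (p + 1) ++ pyramid m ++ w.drop (p + 1)

def erasePyramid (w : List Bool) (p m : ℕ) : List Bool :=
  w.take (p + 1 - m) ++ w.drop (p + 1 + m)

section Pyramids

variable {w : List Bool} {p m : ℕ}

theorem length_insertPyramid : (insertPyramid w p m).length = w.length + 2 * m := by
  simp only [insertPyramid, pyramid, List.length_append, List.length_take, List.length_drop,
    List.length_replicate]
  omega

theorem count_insertPyramid (b : Bool) : (insertPyramid w p m).count b = w.count b + m := by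
  have hsplit := congrArg (List.count b) (List.take_append_drop (p + 1) w)
  rw [List.count_append] at hsplit
  simp only [insertPyramid, List.count_append, count_pyramid]
  omega

theorem isDyckWord_insertPyramid_iff : IsDyckWord (insertPyramid w p m) ↔ IsDyckWord w := by
  rw [insertPyramid, isDyckWord_append_append_iff (isDyckWord_pyramid m), List.take_append_drop]

theorem erasePyramid_insertPyramid (hp : p < w.length) :
    erasePyramid (insertPyramid w p m) (p + m) m = w := by
  have htake : (w.take (p + 1)).length = p + m + 1 - m := by
    rw [List.length_take]; omega
  have hpyr : (w.take (p + 1) ++ pyramid m).length = p + m + 1 + m := by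
    simp only [pyramid, List.length_append, List.length_take, List.length_replicate]; omega
  rw [erasePyramid, insertPyramid, List.drop_left' hpyr, List.append_assoc,
    List.take_left' htake, List.take_append_drop]

theorem insertPyramid_mountain {A B : List Bool} {a : ℕ} (hp : A.length + a = p + 1) (m : ℕ) :
    insertPyramid (A ++ pyramid a ++ B) p m = A ++ pyramid (a + m) ++ B := by
  have hw : A ++ pyramid a ++ B =
      (A ++ List.replicate a true) ++ (List.replicate a false ++ B) := by
    simp [pyramid]
  have hlen : (A ++ List.replicate a true).length = p + 1 := by
    rw [List.length_append, List.length_replicate, hp]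
  rw [insertPyramid, hw, List.take_left' hlen, List.drop_left' hlen]
  simp only [pyramid]
  rw [List.replicate_add a m, Nat.add_comm a m, List.replicate_add m a]
  simp only [List.append_assoc]

theorem erasePyramid_mountain {A B : List Bool} {a : ℕ} (hp : A.length + a = p + 1)
    (hm : m ≤ a) : erasePyramid (A ++ pyramid a ++ B) p m = A ++ pyramid (a - m) ++ B := by
  obtain ⟨k, rfl⟩ : ∃ k, a = k + m := ⟨a - m, by omega⟩
  have hw : A ++ pyramid (k + m) ++ B =
      (A ++ List.replicate k true) ++ pyramid m ++ (List.replicate k false ++ B) := by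
    simp only [pyramid]
    rw [List.replicate_add k m, Nat.add_comm k m, List.replicate_add m k]
    simp only [List.append_assoc]
  have hl : (A ++ List.replicate k true).length = p + 1 - m := by
    rw [List.length_append, List.length_replicate]; omega
  have hr : (A ++ List.replicate k true ++ pyramid m).length = p + 1 + m := by
    simp only [pyramid, List.length_append, List.length_replicate]; omega
  rw [erasePyramid, hw, List.drop_left' hr, List.append_assoc, List.take_left' hl,
    Nat.add_sub_cancel]
  simp [pyramid]

end Pyramids

namespace IsSymMountain

variable {w : List Bool} {p a m : ℕ}

theorem insertPyramid (h : IsSymMountain w p a) (m : ℕ) :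
    IsSymMountain (_root_.insertPyramid w p m) (p + m) (a + m) := by
  obtain ⟨A, B, rfl, hp, ha, hA, hB⟩ := h
  exact ⟨A, B, insertPyramid_mountain hp m, by omega, by omega, hA, hB⟩

theorem erasePyramid (h : IsSymMountain w p a) (hm : m < a) :
    IsSymMountain (_root_.erasePyramid w p m) (p - m) (a - m) := by
  obtain ⟨A, B, rfl, hp, ha, hA, hB⟩ := h
  exact ⟨A, B, erasePyramid_mountain hp hm.le, by omega, by omega, hA, hB⟩

theorem insertPyramid_erasePyramid (h : IsSymMountain w p a) (hm : m < a) :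
    _root_.insertPyramid (_root_.erasePyramid w p m) (p - m) m = w := by
  obtain ⟨A, B, rfl, hp, -⟩ := h
  rw [erasePyramid_mountain hp hm.le, insertPyramid_mountain (by omega),
    Nat.sub_add_cancel hm.le]

end IsSymMountain

def symPeakedDyckLE (n : ℕ) : Set (List Bool × ℕ) :=
  {x | IsDyckWord x.1 ∧ x.1.length ≤ 2 * n ∧ isSymPeakB x.1 x.2 = true}

def weightedSymPeakedDyck (n : ℕ) : Set (List Bool × ℕ × ℕ) :=
  {y | IsDyckWord y.1 ∧ y.1.length = 2 * n ∧ isSymPeakB y.1 y.2.1 = true ∧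
    1 ≤ y.2.2 ∧ y.2.2 ≤ peakWeight y.1 y.2.1}

def growPeak (n : ℕ) (x : List Bool × ℕ) : List Bool × ℕ × ℕ :=
  (insertPyramid x.1 x.2 (n - x.1.count true), x.2 + (n - x.1.count true), peakWeight x.1 x.2)

def shrinkPeak (y : List Bool × ℕ × ℕ) : List Bool × ℕ :=
  (erasePyramid y.1 y.2.1 (peakWeight y.1 y.2.1 - y.2.2), y.2.1 - (peakWeight y.1 y.2.1 - y.2.2))

theorem mapsTo_growPeak (n : ℕ) :
    Set.MapsTo (growPeak n) (symPeakedDyckLE n) (weightedSymPeakedDyck n) := by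
  rintro ⟨w, p⟩ ⟨hd, hlen, hp⟩
  dsimp only at hd hlen hp
  have hM := isSymMountain_of_isSymPeakB hp
  have hM' := hM.insertPyramid (n - w.count true)
  refine ⟨isDyckWord_insertPyramid_iff.2 hd, ?_, hM'.isSymPeakB, hM.pos, ?_⟩
  · simp only [growPeak, length_insertPyramid]
    have := hd.length_eq
    omega
  · simp only [growPeak, hM'.peakWeight_eq]
    omega

theorem mapsTo_shrinkPeak (n : ℕ) :
    Set.MapsTo shrinkPeak (weightedSymPeakedDyck n) (symPeakedDyckLE n) := by
  rintro ⟨w, p, i⟩ ⟨hd, hlen, hp, hi₁, hi₂⟩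
  dsimp only at *
  have hM := isSymMountain_of_isSymPeakB hp
  have hm : peakWeight w p - i < peakWeight w p := by omega
  have hw := hM.insertPyramid_erasePyramid hm
  refine ⟨isDyckWord_insertPyramid_iff.1 (hw ▸ hd), ?_, (hM.erasePyramid hm).isSymPeakB⟩
  have := congrArg List.length hw
  rw [length_insertPyramid] at this
  simp only [shrinkPeak]
  omega

theorem leftInvOn_shrinkPeak_growPeak (n : ℕ) :
    Set.LeftInvOn shrinkPeak (growPeak n) (symPeakedDyckLE n) := by
  rintro ⟨w, p⟩ ⟨-, -, hp⟩
  have hM := isSymMountain_of_isSymPeakB hp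
  simp only [growPeak, shrinkPeak, (hM.insertPyramid _).peakWeight_eq, Nat.add_sub_cancel_left,
    erasePyramid_insertPyramid hM.lt_length, Nat.add_sub_cancel]

theorem rightInvOn_shrinkPeak_growPeak (n : ℕ) :
    Set.RightInvOn shrinkPeak (growPeak n) (weightedSymPeakedDyck n) := by
  rintro ⟨w, p, i⟩ ⟨hd, hlen, hp, hi₁, hi₂⟩
  dsimp only at *
  have hM := isSymMountain_of_isSymPeakB hp
  have hm : peakWeight w p - i < peakWeight w p := by omega
  have hw := hM.insertPyramid_erasePyramid hm
  have hcount : n - (erasePyramid w p (peakWeight w p - i)).count true = peakWeight w p - i := by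
    have := congrArg (List.count true) hw
    rw [count_insertPyramid] at this
    have := hd.length_eq
    omega
  have hle := hM.le_succ
  simp only [shrinkPeak, growPeak, hcount, hw,
    Nat.sub_add_cancel (by omega : peakWeight w p - i ≤ p),
    (hM.erasePyramid hm).peakWeight_eq, Nat.sub_sub_self hi₂]

/-- There is a bijection between pairs `(D, P)` where `D` is a
Dyck path of semilength at most `n` with a distinguished symmetric peak `P`, and
triples `(D', P', i)` where `D'` is a Dyck path of semilength exactly `n` with a
distinguished symmetric peak `P'` and `1 ≤ i ≤ weight of P'` (realized by
inserting a pyramid `u^{n−k} d^{n−k}` at the top of the distinguished peak). -/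
theorem symmetric_peak_weight_bijection (n : ℕ) :
    Nonempty
      ({p : List Bool × ℕ //
          IsDyckWord p.1 ∧ p.1.length ≤ 2 * n ∧ isSymPeakB p.1 p.2 = true} ≃
       {q : List Bool × ℕ × ℕ //
          IsDyckWord q.1 ∧ q.1.length = 2 * n ∧ isSymPeakB q.1 q.2.1 = true ∧
          1 ≤ q.2.2 ∧ q.2.2 ≤ peakWeight q.1 q.2.1}) :=
  ⟨(Set.InvOn.bijOn ⟨leftInvOn_shrinkPeak_growPeak n, rightInvOn_shrinkPeak_growPeak n⟩
    (mapsTo_growPeak n) (mapsTo_shrinkPeak n)).equiv _⟩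
end
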